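/- arXiv:2406.15129 — 11 statements merged into one kernel-verified Lean document; each statement's English description precedes it below -/
import Mathlib

section
/- For any three sets A, B, C ⊆ V, c(A) + c(B) + c(C) ≥ c(A ∩ B ∩ C) + c(Aᶜ ∩ Bᶜ ∩ C) + c(Aᶜ ∩ B ∩ Cᶜ) + c(A ∩ Bᶜ ∩ Cᶜ), where complements are taken inside V (Four Component Lemma). -/
open Finset

namespace Paper

variable {α : Type*} [Fintype α] [DecidableEq α]

/-- Capacity of a cut `A` in an undirected multigraph with edge multiplicities `w`. -/
def cutCap (w : α → α → ℕ) (A : Finset α) : ℕ := ∑ u ∈ A, ∑ v ∈ Aᶜ, w u v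

/-- `C` is a Steiner cut for the Steiner set `S`. -/
def IsSteinerCut (S C : Finset α) : Prop := (C ∩ S).Nonempty ∧ (S \ C).Nonempty

/-- `C` is an `S`-mincut: a Steiner cut of capacity `lam = λ_S`. -/
def IsSMincut (w : α → α → ℕ) (S : Finset α) (lam : ℕ) (C : Finset α) : Prop :=
  IsSteinerCut S C ∧ cutCap w C = lam

/-- `C` is a `(λ_S+1)` cut: a Steiner cut of capacity `lam + 1`. -/
def IsPlusOneCut (w : α → α → ℕ) (S : Finset α) (lam : ℕ) (C : Finset α) : Prop :=
  IsSteinerCut S C ∧ cutCap w C = lam + 1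

/-- A cut `C` separates `u` and `v`: exactly one of them lies in `C`. -/
def Separates (C : Finset α) (u v : α) : Prop := (u ∈ C ∧ v ∉ C) ∨ (v ∈ C ∧ u ∉ C)

/-- `W` is a `(λ_S+1)` class: an equivalence class of the relation relating `u,v`
iff no `S`-mincut separates them. -/
def IsClass (w : α → α → ℕ) (S : Finset α) (lam : ℕ) (W : Finset α) : Prop :=
  ∃ u0 : α, ∀ v : α, v ∈ W ↔ ∀ C : Finset α, IsSMincut w S lam C → ¬ Separates C u0 v

/-- `C` is a nearest `(λ_S+1)` cut of `u` containing the Steiner vertex `s`. -/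
def IsNearestPlusOneCut (w : α → α → ℕ) (S : Finset α) (lam : ℕ) (s u : α)
    (C : Finset α) : Prop :=
  IsPlusOneCut w S lam C ∧ s ∈ C ∧ u ∈ C ∧
    ∀ C' : Finset α, IsPlusOneCut w S lam C' → s ∈ C' → u ∈ C' → ¬ C' ⊂ C

/-- A cut `C` subdivides a set `X`. -/
def Subdivides (C X : Finset α) : Prop := (X ∩ C).Nonempty ∧ (X \ C).Nonempty
private lemma sum_ite_mem' (X : Finset α) (f : α → ℕ) :
    ∑ u, (if u ∈ X then f u else 0) = ∑ u ∈ X, f u := by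
  rw [← Finset.sum_filter]
  congr 1
  ext u
  simp

private lemma cutCap_eq_sum (w : α → α → ℕ) (X : Finset α) :
    cutCap w X = ∑ u, ∑ v, if u ∈ X ∧ v ∉ X then w u v else 0 := by
  unfold cutCap
  have inner : ∀ u, (∑ v, if u ∈ X ∧ v ∉ X then w u v else 0)
      = if u ∈ X then ∑ v ∈ Xᶜ, w u v else 0 := by
    intro u
    by_cases hu : u ∈ X
    · simp only [hu, if_true, true_and]
      rw [← sum_ite_mem' Xᶜ (w u)]
      refine Finset.sum_congr rfl fun v _ => ?_
      simp [Finset.mem_compl]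
    · simp [hu]
  simp only [inner]
  rw [sum_ite_mem']

private lemma two_mul_cutCap (w : α → α → ℕ) (hsym : ∀ u v, w u v = w v u) (X : Finset α) :
    2 * cutCap w X = ∑ u, ∑ v,
      if (u ∈ X ∧ v ∉ X) ∨ (v ∈ X ∧ u ∉ X) then w u v else 0 := by
  have h2 : cutCap w X = ∑ u, ∑ v, if v ∈ X ∧ u ∉ X then w u v else 0 := by
    rw [cutCap_eq_sum w X, Finset.sum_comm]
    refine Finset.sum_congr rfl fun u _ => Finset.sum_congr rfl fun v _ => ?_
    rw [hsym]
  rw [two_mul]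
  nth_rewrite 1 [cutCap_eq_sum w X]
  rw [h2]
  rw [← Finset.sum_add_distrib]
  refine Finset.sum_congr rfl fun u _ => ?_
  rw [← Finset.sum_add_distrib]
  refine Finset.sum_congr rfl fun v _ => ?_
  by_cases h1 : u ∈ X <;> by_cases h2 : v ∈ X <;> simp [h1, h2]

/-- Four Component Lemma. -/
theorem four_component_lemma
    (w : α → α → ℕ) (hsym : ∀ u v, w u v = w v u) (hdiag : ∀ u, w u u = 0)
    (A B C : Finset α) :
    cutCap w (A ∩ B ∩ C) + cutCap w (Aᶜ ∩ Bᶜ ∩ C) + cutCap w (Aᶜ ∩ B ∩ Cᶜ)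
        + cutCap w (A ∩ Bᶜ ∩ Cᶜ)
      ≤ cutCap w A + cutCap w B + cutCap w C := by
  have key : 2 * (cutCap w (A ∩ B ∩ C) + cutCap w (Aᶜ ∩ Bᶜ ∩ C) + cutCap w (Aᶜ ∩ B ∩ Cᶜ)
        + cutCap w (A ∩ Bᶜ ∩ Cᶜ))
      ≤ 2 * (cutCap w A + cutCap w B + cutCap w C) := by
    simp only [Nat.mul_add, two_mul_cutCap w hsym, ← Finset.sum_add_distrib]
    refine Finset.sum_le_sum fun u _ => Finset.sum_le_sum fun v _ => ?_
    simp only [mem_inter, mem_compl]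
    by_cases ha : u ∈ A <;> by_cases hb : u ∈ B <;> by_cases hc : u ∈ C <;>
      by_cases ha' : v ∈ A <;> by_cases hb' : v ∈ B <;> by_cases hc' : v ∈ C <;>
      simp [ha, hb, hc, ha', hb', hc']
  omega


end Paper
end

section
/- (Gen-3-Star Lemma, part 1) Let C1, C2, C3 be (λ_S+1) cuts and suppose there exist Steiner vertices a ∈ V_a, b ∈ V_b, c ∈ V_c. Then c(C1 ∩ C2 ∩ C3) ≤ 3. -/
open Finset

namespace Paper

variable {α : Type*} [Fintype α] [DecidableEq α]

lemma cutCap_eq (w : α → α → ℕ) (A : Finset α) :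
    cutCap w A = ∑ u : α, ∑ v : α, if u ∈ A ∧ v ∉ A then w u v else 0 := by
  classical
  have h1 : cutCap w A = ∑ u : α, if u ∈ A then (∑ v : α, if v ∉ A then w u v else 0) else 0 := by
    unfold cutCap
    rw [Finset.sum_ite_mem Finset.univ A, Finset.univ_inter]
    refine Finset.sum_congr rfl fun u hu => ?_
    rw [show (fun v => if v ∉ A then w u v else 0) = fun v => if v ∈ Aᶜ then w u v else 0 from by
          funext v; simp,
        Finset.sum_ite_mem Finset.univ Aᶜ, Finset.univ_inter]
  rw [h1]
  refine Finset.sum_congr rfl fun u _ => ?_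
  by_cases hu : u ∈ A <;> simp [hu]

instance sepDecidable (C : Finset α) (u v : α) : Decidable (Separates C u v) :=
  inferInstanceAs (Decidable (_ ∨ _))

lemma two_cutCap (w : α → α → ℕ) (hsym : ∀ u v, w u v = w v u) (A : Finset α) :
    2 * cutCap w A = ∑ u : α, ∑ v : α, if Separates A u v then w u v else 0 := by
  classical
  have hsplit : ∀ u v : α, (if Separates A u v then w u v else 0) =
      (if u ∈ A ∧ v ∉ A then w u v else 0) + (if v ∈ A ∧ u ∉ A then w u v else 0) := by
    intro u v
    by_cases h1 : u ∈ A <;> by_cases h2 : v ∈ A <;> simp [Separates, h1, h2]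
  calc 2 * cutCap w A = cutCap w A + cutCap w A := by ring
    _ = (∑ u : α, ∑ v : α, if u ∈ A ∧ v ∉ A then w u v else 0)
        + (∑ u : α, ∑ v : α, if v ∈ A ∧ u ∉ A then w u v else 0) := by
        rw [cutCap_eq]
        congr 1
        rw [Finset.sum_comm]
        refine Finset.sum_congr rfl fun u _ => Finset.sum_congr rfl fun v _ => ?_
        rw [hsym]
    _ = ∑ u : α, ∑ v : α, if Separates A u v then w u v else 0 := by
        rw [← Finset.sum_add_distrib]
        refine Finset.sum_congr rfl fun u _ => ?_
        rw [← Finset.sum_add_distrib]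
        exact Finset.sum_congr rfl fun v _ => (hsplit u v).symm

lemma sep_pointwise (C1 C2 C3 : Finset α) (u v : α) (x : ℕ) :
    ((if Separates (C1 ∩ C2ᶜ ∩ C3ᶜ) u v then x else 0) +
     (if Separates (C1ᶜ ∩ C2 ∩ C3ᶜ) u v then x else 0)) +
    ((if Separates (C1ᶜ ∩ C2ᶜ ∩ C3) u v then x else 0) +
     (if Separates (C1 ∩ C2 ∩ C3) u v then x else 0)) ≤
    (if Separates C1 u v then x else 0) +
    ((if Separates C2 u v then x else 0) + (if Separates C3 u v then x else 0)) := by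
  classical
  simp only [Separates, Finset.mem_inter, Finset.mem_compl]
  by_cases h1 : u ∈ C1 <;> by_cases h2 : u ∈ C2 <;> by_cases h3 : u ∈ C3 <;>
    by_cases h4 : v ∈ C1 <;> by_cases h5 : v ∈ C2 <;> by_cases h6 : v ∈ C3 <;>
    simp [h1, h2, h3, h4, h5, h6]

/-- Gen-3-Star Lemma, part 1. -/
theorem gen_three_star_lemma_part1
    (w : α → α → ℕ) (hsym : ∀ u v, w u v = w v u) (hdiag : ∀ u, w u u = 0)
    (S : Finset α) (hScard : 2 ≤ S.card) (lam : ℕ)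
    (hlam_ex : ∃ C : Finset α, IsSteinerCut S C ∧ cutCap w C = lam)
    (hlam_min : ∀ C : Finset α, IsSteinerCut S C → lam ≤ cutCap w C)
    (C1 C2 C3 : Finset α)
    (h1 : IsPlusOneCut w S lam C1) (h2 : IsPlusOneCut w S lam C2)
    (h3 : IsPlusOneCut w S lam C3)
    (a b c : α) (haS : a ∈ S) (hbS : b ∈ S) (hcS : c ∈ S)
    (ha : a ∈ C1 ∩ C2ᶜ ∩ C3ᶜ) (hb : b ∈ C1ᶜ ∩ C2 ∩ C3ᶜ) (hc : c ∈ C1ᶜ ∩ C2ᶜ ∩ C3) :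
    cutCap w (C1 ∩ C2 ∩ C3) ≤ 3 := by
  classical
  simp only [Finset.mem_inter, Finset.mem_compl] at ha hb hc
  have hVa : IsSteinerCut S (C1 ∩ C2ᶜ ∩ C3ᶜ) := by
    refine ⟨⟨a, ?_⟩, ⟨b, ?_⟩⟩ <;>
      simp [Finset.mem_inter, Finset.mem_compl, Finset.mem_sdiff,
        ha.1.1, ha.1.2, ha.2, hb.1.1, haS, hbS]
  have hVb : IsSteinerCut S (C1ᶜ ∩ C2 ∩ C3ᶜ) := by
    refine ⟨⟨b, ?_⟩, ⟨a, ?_⟩⟩ <;>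
      simp [Finset.mem_inter, Finset.mem_compl, Finset.mem_sdiff,
        hb.1.1, hb.1.2, hb.2, ha.1.2, haS, hbS]
  have hVc : IsSteinerCut S (C1ᶜ ∩ C2ᶜ ∩ C3) := by
    refine ⟨⟨c, ?_⟩, ⟨a, ?_⟩⟩ <;>
      simp [Finset.mem_inter, Finset.mem_compl, Finset.mem_sdiff,
        hc.1.1, hc.1.2, hc.2, ha.2, haS, hcS]
  have key : (2 * cutCap w (C1 ∩ C2ᶜ ∩ C3ᶜ) + 2 * cutCap w (C1ᶜ ∩ C2 ∩ C3ᶜ)) +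
      (2 * cutCap w (C1ᶜ ∩ C2ᶜ ∩ C3) + 2 * cutCap w (C1 ∩ C2 ∩ C3)) ≤
      2 * cutCap w C1 + (2 * cutCap w C2 + 2 * cutCap w C3) := by
    simp only [two_cutCap w hsym, ← Finset.sum_add_distrib]
    exact Finset.sum_le_sum fun u _ => Finset.sum_le_sum fun v _ =>
      sep_pointwise C1 C2 C3 u v (w u v)
  have la := hlam_min _ hVa
  have lb := hlam_min _ hVb
  have lc := hlam_min _ hVc
  have e1 := h1.2
  have e2 := h2.2
  have e3 := h3.2
  omega


end Paper
end

section
/- (Gen-3-Star Lemma, part 2) Let C1, C2, C3 be (λ_S+1) cuts and suppose there exist Steiner vertices a ∈ V_a, b ∈ V_b, c ∈ V_c. Let W be a (λ_S+1) class, let u ∈ V_Φ ∩ W, and let k ∈ {0,1,2,3} be such that exactly k of the three sets V_a, V_b, V_c contain a vertex of W. Then c(C1 ∩ C2 ∩ C3) ≤ 3 − k. -/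
open Finset

namespace Paper

variable {α : Type*} [Fintype α] [DecidableEq α]

/-- indicator of an ordered pair crossing a cut -/
def chi (A : Finset α) (p q : α) : ℕ := if p ∈ A ∧ q ∉ A then 1 else 0

lemma cutCap_eq_sum_s3 (w : α → α → ℕ) (A : Finset α) :
    cutCap w A = ∑ p : α, ∑ q : α, chi A p q * w p q := by
  have h1 : ∀ p, (∑ q : α, chi A p q * w p q)
      = if p ∈ A then ∑ q ∈ Aᶜ, w p q else 0 := by
    intro p
    by_cases hp : p ∈ A
    · rw [if_pos hp]
      have h2 : ∑ q ∈ Aᶜ, w p q = ∑ q : α, if q ∈ Aᶜ then w p q else 0 := by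
        rw [Finset.sum_ite_mem, Finset.univ_inter]
      rw [h2]
      exact Finset.sum_congr rfl fun q _ => by
        by_cases hq : q ∈ A <;> simp [chi, hp, hq]
    · simp [chi, hp]
  simp only [h1]
  rw [Finset.sum_ite_mem, Finset.univ_inter]
  rfl

lemma pointwise_key (C1 C2 C3 : Finset α) (p q : α) :
    chi (C1 ∩ C2ᶜ ∩ C3ᶜ) p q + chi (C1ᶜ ∩ C2 ∩ C3ᶜ) p q + chi (C1ᶜ ∩ C2ᶜ ∩ C3) p q
      + chi (C1 ∩ C2 ∩ C3) p q
      + (chi (C1 ∩ C2ᶜ ∩ C3ᶜ) q p + chi (C1ᶜ ∩ C2 ∩ C3ᶜ) q p + chi (C1ᶜ ∩ C2ᶜ ∩ C3) q p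
      + chi (C1 ∩ C2 ∩ C3) q p)
    ≤ chi C1 p q + chi C2 p q + chi C3 p q + (chi C1 q p + chi C2 q p + chi C3 q p) := by
  by_cases h1 : p ∈ C1 <;> by_cases h2 : p ∈ C2 <;> by_cases h3 : p ∈ C3 <;>
    by_cases g1 : q ∈ C1 <;> by_cases g2 : q ∈ C2 <;> by_cases g3 : q ∈ C3 <;>
    simp [chi, h1, h2, h3, g1, g2, g3]

lemma star_capacity_sum (w : α → α → ℕ) (hsym : ∀ u v, w u v = w v u)
    (C1 C2 C3 : Finset α) :
    cutCap w (C1 ∩ C2ᶜ ∩ C3ᶜ) + cutCap w (C1ᶜ ∩ C2 ∩ C3ᶜ) + cutCap w (C1ᶜ ∩ C2ᶜ ∩ C3)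
      + cutCap w (C1 ∩ C2 ∩ C3)
    ≤ cutCap w C1 + cutCap w C2 + cutCap w C3 := by
  have swap : ∀ A : Finset α,
      (∑ p : α, ∑ q : α, chi A q p * w p q) = ∑ p : α, ∑ q : α, chi A p q * w p q := by
    intro A
    rw [Finset.sum_comm]
    exact Finset.sum_congr rfl fun p _ => Finset.sum_congr rfl fun q _ => by rw [hsym]
  have main2 : (∑ p : α, ∑ q : α,
      (chi (C1 ∩ C2ᶜ ∩ C3ᶜ) p q + chi (C1ᶜ ∩ C2 ∩ C3ᶜ) p q + chi (C1ᶜ ∩ C2ᶜ ∩ C3) p q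
        + chi (C1 ∩ C2 ∩ C3) p q
        + (chi (C1 ∩ C2ᶜ ∩ C3ᶜ) q p + chi (C1ᶜ ∩ C2 ∩ C3ᶜ) q p + chi (C1ᶜ ∩ C2ᶜ ∩ C3) q p
        + chi (C1 ∩ C2 ∩ C3) q p)) * w p q)
      ≤ ∑ p : α, ∑ q : α,
      (chi C1 p q + chi C2 p q + chi C3 p q + (chi C1 q p + chi C2 q p + chi C3 q p)) * w p q :=
    Finset.sum_le_sum fun p _ => Finset.sum_le_sum fun q _ =>
      Nat.mul_le_mul_right _ (pointwise_key C1 C2 C3 p q)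
  simp only [add_mul, Finset.sum_add_distrib] at main2
  rw [swap, swap, swap, swap, swap, swap, swap] at main2
  rw [← cutCap_eq_sum_s3 w (C1 ∩ C2ᶜ ∩ C3ᶜ), ← cutCap_eq_sum_s3 w (C1ᶜ ∩ C2 ∩ C3ᶜ),
      ← cutCap_eq_sum_s3 w (C1ᶜ ∩ C2ᶜ ∩ C3), ← cutCap_eq_sum_s3 w (C1 ∩ C2 ∩ C3),
      ← cutCap_eq_sum_s3 w C1, ← cutCap_eq_sum_s3 w C2, ← cutCap_eq_sum_s3 w C3] at main2
  omega

/-- Gen-3-Star Lemma, part 2. -/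
theorem gen_three_star_lemma_part2
    (w : α → α → ℕ) (hsym : ∀ u v, w u v = w v u) (hdiag : ∀ u, w u u = 0)
    (S : Finset α) (hScard : 2 ≤ S.card) (lam : ℕ)
    (hlam_ex : ∃ C : Finset α, IsSteinerCut S C ∧ cutCap w C = lam)
    (hlam_min : ∀ C : Finset α, IsSteinerCut S C → lam ≤ cutCap w C)
    (C1 C2 C3 : Finset α)
    (h1 : IsPlusOneCut w S lam C1) (h2 : IsPlusOneCut w S lam C2)
    (h3 : IsPlusOneCut w S lam C3)
    (a b c : α) (haS : a ∈ S) (hbS : b ∈ S) (hcS : c ∈ S)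
    (ha : a ∈ C1 ∩ C2ᶜ ∩ C3ᶜ) (hb : b ∈ C1ᶜ ∩ C2 ∩ C3ᶜ) (hc : c ∈ C1ᶜ ∩ C2ᶜ ∩ C3)
    (W : Finset α) (hW : IsClass w S lam W)
    (u : α) (huPhi : u ∈ C1ᶜ ∩ C2ᶜ ∩ C3ᶜ) (huW : u ∈ W)
    (k : ℕ)
    (hk : k = (if ((C1 ∩ C2ᶜ ∩ C3ᶜ) ∩ W).Nonempty then 1 else 0)
            + (if ((C1ᶜ ∩ C2 ∩ C3ᶜ) ∩ W).Nonempty then 1 else 0)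
            + (if ((C1ᶜ ∩ C2ᶜ ∩ C3) ∩ W).Nonempty then 1 else 0)) :
    cutCap w (C1 ∩ C2 ∩ C3) ≤ 3 - k := by
  have hmain := star_capacity_sum w hsym C1 C2 C3
  have hau : a ∈ C1 ∧ a ∉ C2 ∧ a ∉ C3 := by
    simp only [Finset.mem_inter, Finset.mem_compl] at ha; tauto
  have hbu : b ∉ C1 ∧ b ∈ C2 ∧ b ∉ C3 := by
    simp only [Finset.mem_inter, Finset.mem_compl] at hb; tauto
  have hcu : c ∉ C1 ∧ c ∉ C2 ∧ c ∈ C3 := by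
    simp only [Finset.mem_inter, Finset.mem_compl] at hc; tauto
  have huu : u ∉ C1 ∧ u ∉ C2 ∧ u ∉ C3 := by
    simp only [Finset.mem_inter, Finset.mem_compl] at huPhi; tauto
  -- Steiner-cut property of the three corner regions
  have hSa : IsSteinerCut S (C1 ∩ C2ᶜ ∩ C3ᶜ) := by
    constructor
    · exact ⟨a, Finset.mem_inter.2 ⟨ha, haS⟩⟩
    · refine ⟨b, Finset.mem_sdiff.2 ⟨hbS, ?_⟩⟩
      simp only [Finset.mem_inter, Finset.mem_compl]; tauto
  have hSb : IsSteinerCut S (C1ᶜ ∩ C2 ∩ C3ᶜ) := by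
    constructor
    · exact ⟨b, Finset.mem_inter.2 ⟨hb, hbS⟩⟩
    · refine ⟨a, Finset.mem_sdiff.2 ⟨haS, ?_⟩⟩
      simp only [Finset.mem_inter, Finset.mem_compl]; tauto
  have hSc : IsSteinerCut S (C1ᶜ ∩ C2ᶜ ∩ C3) := by
    constructor
    · exact ⟨c, Finset.mem_inter.2 ⟨hc, hcS⟩⟩
    · refine ⟨a, Finset.mem_sdiff.2 ⟨haS, ?_⟩⟩
      simp only [Finset.mem_inter, Finset.mem_compl]; tauto
  -- no S-mincut separates two members of W
  have hclass : ∀ v ∈ W, ∀ C : Finset α, IsSMincut w S lam C → ¬ Separates C u v := by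
    obtain ⟨u0, hu0⟩ := hW
    intro v hv C hC hsep
    have hA := (hu0 u).1 huW C hC
    have hB := (hu0 v).1 hv C hC
    unfold Separates at hA hB hsep
    tauto
  -- lower bounds
  have plus : ∀ V : Finset α, IsSteinerCut S V → u ∉ V →
      ((V ∩ W).Nonempty → lam + 1 ≤ cutCap w V) := by
    intro V hSV huV ⟨v, hvm⟩
    have hvV : v ∈ V := (Finset.mem_inter.1 hvm).1
    have hvW : v ∈ W := (Finset.mem_inter.1 hvm).2
    have hmin := hlam_min V hSV
    rcases Nat.lt_or_ge lam (cutCap w V) with h | h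
    · omega
    · exfalso
      have hmc : IsSMincut w S lam V := ⟨hSV, by omega⟩
      exact hclass v hvW V hmc (Or.inr ⟨hvV, huV⟩)
  have huVa : u ∉ C1 ∩ C2ᶜ ∩ C3ᶜ := by
    simp only [Finset.mem_inter, Finset.mem_compl]; tauto
  have huVb : u ∉ C1ᶜ ∩ C2 ∩ C3ᶜ := by
    simp only [Finset.mem_inter, Finset.mem_compl]; tauto
  have huVc : u ∉ C1ᶜ ∩ C2ᶜ ∩ C3 := by
    simp only [Finset.mem_inter, Finset.mem_compl]; tauto
  have ba : (if ((C1 ∩ C2ᶜ ∩ C3ᶜ) ∩ W).Nonempty then 1 else 0) + lam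
      ≤ cutCap w (C1 ∩ C2ᶜ ∩ C3ᶜ) := by
    split_ifs with h
    · have := plus _ hSa huVa h; omega
    · have := hlam_min _ hSa; omega
  have bb : (if ((C1ᶜ ∩ C2 ∩ C3ᶜ) ∩ W).Nonempty then 1 else 0) + lam
      ≤ cutCap w (C1ᶜ ∩ C2 ∩ C3ᶜ) := by
    split_ifs with h
    · have := plus _ hSb huVb h; omega
    · have := hlam_min _ hSb; omega
  have bc : (if ((C1ᶜ ∩ C2ᶜ ∩ C3) ∩ W).Nonempty then 1 else 0) + lam
      ≤ cutCap w (C1ᶜ ∩ C2ᶜ ∩ C3) := by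
    split_ifs with h
    · have := plus _ hSc huVc h; omega
    · have := hlam_min _ hSc; omega
  have e1 : cutCap w C1 = lam + 1 := h1.2
  have e2 : cutCap w C2 = lam + 1 := h2.2
  have e3 : cutCap w C3 = lam + 1 := h3.2
  omega

end Paper
end

section
/- (Gen-3-Star Lemma, part 3) Let C1, C2, C3 be (λ_S+1) cuts and suppose there exist Steiner vertices a ∈ V_a, b ∈ V_b, c ∈ V_c. Then the number of edges joining V_ab to V ∖ (V_a ∪ V_b ∪ V_ab), namely ∑_{p ∈ V_ab} ∑_{q ∈ V_c ∪ V_ac ∪ V_bc ∪ V_abc ∪ V_Φ} w(p,q), is at most 2. -/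
open Finset

namespace Paper

variable {α : Type*} [Fintype α] [DecidableEq α]

set_option linter.unusedSectionVars false in
private def dd (w : α → α → ℕ) (X Y : Finset α) : ℕ := ∑ p ∈ X, ∑ q ∈ Y, w p q

set_option linter.unusedSectionVars false in
private lemma dd_symm (w : α → α → ℕ) (hsym : ∀ u v, w u v = w v u) (X Y : Finset α) :
    dd w X Y = dd w Y X := by
  unfold dd
  rw [Finset.sum_comm]
  exact Finset.sum_congr rfl fun q _ => Finset.sum_congr rfl fun p _ => hsym p q

set_option linter.unusedSectionVars false in
private lemma dd_left (w : α → α → ℕ) {X Y : Finset α} (Z : Finset α) (h : Disjoint X Y) :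
    dd w (X ∪ Y) Z = dd w X Z + dd w Y Z :=
  Finset.sum_union h

set_option linter.unusedSectionVars false in
private lemma dd_right (w : α → α → ℕ) (X : Finset α) {Y Z : Finset α} (h : Disjoint Y Z) :
    dd w X (Y ∪ Z) = dd w X Y + dd w X Z := by
  unfold dd
  rw [← Finset.sum_add_distrib]
  exact Finset.sum_congr rfl fun p _ => Finset.sum_union h

set_option linter.unusedSectionVars false in
private lemma cutCap_eq_dd (w : α → α → ℕ) (X : Finset α) : cutCap w X = dd w X Xᶜ := rfl

set_option linter.unusedSectionVars false in
private lemma cap_union (w : α → α → ℕ) (hsym : ∀ u v, w u v = w v u) (X Y : Finset α)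
    (h : Disjoint X Y) :
    cutCap w X + cutCap w Y = cutCap w (X ∪ Y) + 2 * dd w X Y := by
  have hd := Finset.disjoint_left.mp h
  have hXc : Xᶜ = Y ∪ (X ∪ Y)ᶜ := by
    ext z
    simp only [mem_compl, mem_union, not_or]
    constructor
    · intro hz
      by_cases hy : z ∈ Y
      · exact Or.inl hy
      · exact Or.inr ⟨hz, hy⟩
    · rintro (hy | ⟨h1, _⟩)
      · exact fun hx => hd hx hy
      · exact h1
  have hYc : Yᶜ = X ∪ (X ∪ Y)ᶜ := by
    ext z
    simp only [mem_compl, mem_union, not_or]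
    constructor
    · intro hz
      by_cases hx : z ∈ X
      · exact Or.inl hx
      · exact Or.inr ⟨hx, hz⟩
    · rintro (hx | ⟨_, h2⟩)
      · exact fun hy => hd hx hy
      · exact h2
  have d1 : Disjoint Y (X ∪ Y)ᶜ :=
    Finset.disjoint_left.mpr (by intro z h1 h2; simp only [mem_compl, mem_union] at h2; tauto)
  have d2 : Disjoint X (X ∪ Y)ᶜ :=
    Finset.disjoint_left.mpr (by intro z h1 h2; simp only [mem_compl, mem_union] at h2; tauto)
  have e1 : cutCap w X = dd w X Y + dd w X (X ∪ Y)ᶜ := by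
    rw [cutCap_eq_dd, hXc, dd_right w X d1]
  have e2 : cutCap w Y = dd w Y X + dd w Y (X ∪ Y)ᶜ := by
    rw [cutCap_eq_dd, hYc, dd_right w Y d2]
  have e3 : cutCap w (X ∪ Y) = dd w X (X ∪ Y)ᶜ + dd w Y (X ∪ Y)ᶜ := by
    rw [cutCap_eq_dd, dd_left w _ h]
  have e4 : dd w Y X = dd w X Y := dd_symm w hsym Y X
  omega

set_option linter.unusedSectionVars false in
private lemma cap_posi (w : α → α → ℕ) (hsym : ∀ u v, w u v = w v u) (X Y : Finset α) :
    cutCap w (X \ Y) + cutCap w (Y \ X) ≤ cutCap w X + cutCap w Y := by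
  set x := X \ Y with hx
  set y := Y \ X with hy
  set m := X ∩ Y with hm
  set o := (X ∪ Y)ᶜ with ho
  have hXeq : X = x ∪ m := by
    ext z; simp only [hx, hm, mem_union, mem_sdiff, mem_inter]; tauto
  have hYeq : Y = y ∪ m := by
    ext z; simp only [hy, hm, mem_union, mem_sdiff, mem_inter]; tauto
  have hXc : Xᶜ = y ∪ o := by
    ext z; simp only [hy, ho, mem_compl, mem_union, mem_sdiff]; tauto
  have hYc : Yᶜ = x ∪ o := by
    ext z; simp only [hx, ho, mem_compl, mem_union, mem_sdiff]; tauto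
  have hxc : xᶜ = y ∪ (m ∪ o) := by
    ext z; simp only [hx, hy, hm, ho, mem_compl, mem_union, mem_sdiff, mem_inter]; tauto
  have hyc : yᶜ = x ∪ (m ∪ o) := by
    ext z; simp only [hx, hy, hm, ho, mem_compl, mem_union, mem_sdiff, mem_inter]; tauto
  have dxm : Disjoint x m := Finset.disjoint_left.mpr (by
    intro z h1 h2; simp only [hx, hm, mem_sdiff, mem_inter] at h1 h2; tauto)
  have dym : Disjoint y m := Finset.disjoint_left.mpr (by
    intro z h1 h2; simp only [hy, hm, mem_sdiff, mem_inter] at h1 h2; tauto)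
  have dyo : Disjoint y o := Finset.disjoint_left.mpr (by
    intro z h1 h2; simp only [hy, ho, mem_sdiff, mem_compl, mem_union] at h1 h2; tauto)
  have dxo : Disjoint x o := Finset.disjoint_left.mpr (by
    intro z h1 h2; simp only [hx, ho, mem_sdiff, mem_compl, mem_union] at h1 h2; tauto)
  have dmo : Disjoint m o := Finset.disjoint_left.mpr (by
    intro z h1 h2; simp only [hm, ho, mem_inter, mem_compl, mem_union] at h1 h2; tauto)
  have eX : cutCap w X = (dd w x y + dd w x o) + (dd w m y + dd w m o) := by
    rw [cutCap_eq_dd]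
    rw [hXc, hXeq, dd_left w _ dxm, dd_right w x dyo, dd_right w m dyo]
  have eY : cutCap w Y = (dd w y x + dd w y o) + (dd w m x + dd w m o) := by
    rw [cutCap_eq_dd]
    rw [hYc, hYeq, dd_left w _ dym, dd_right w y dxo, dd_right w m dxo]
  have ex : cutCap w x = dd w x y + (dd w x m + dd w x o) := by
    rw [cutCap_eq_dd]
    rw [hxc, dd_right w x (Finset.disjoint_union_right.mpr ⟨dym, dyo⟩), dd_right w x dmo]
  have ey : cutCap w y = dd w y x + (dd w y m + dd w y o) := by
    rw [cutCap_eq_dd]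
    rw [hyc, dd_right w y (Finset.disjoint_union_right.mpr ⟨dxm, dxo⟩), dd_right w y dmo]
  have s1 : dd w x m = dd w m x := dd_symm w hsym x m
  have s2 : dd w y m = dd w m y := dd_symm w hsym y m
  calc cutCap w (X \ Y) + cutCap w (Y \ X) = cutCap w x + cutCap w y := rfl
    _ ≤ cutCap w X + cutCap w Y := by rw [eX, eY, ex, ey]; omega

set_option maxHeartbeats 2000000 in
/-- Gen-3-Star Lemma, part 3. -/
theorem gen_three_star_lemma_part3
    (w : α → α → ℕ) (hsym : ∀ u v, w u v = w v u) (hdiag : ∀ u, w u u = 0)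
    (S : Finset α) (hScard : 2 ≤ S.card) (lam : ℕ)
    (hlam_ex : ∃ C : Finset α, IsSteinerCut S C ∧ cutCap w C = lam)
    (hlam_min : ∀ C : Finset α, IsSteinerCut S C → lam ≤ cutCap w C)
    (C1 C2 C3 : Finset α)
    (h1 : IsPlusOneCut w S lam C1) (h2 : IsPlusOneCut w S lam C2)
    (h3 : IsPlusOneCut w S lam C3)
    (a b c : α) (haS : a ∈ S) (hbS : b ∈ S) (hcS : c ∈ S)
    (ha : a ∈ C1 ∩ C2ᶜ ∩ C3ᶜ) (hb : b ∈ C1ᶜ ∩ C2 ∩ C3ᶜ) (hc : c ∈ C1ᶜ ∩ C2ᶜ ∩ C3) :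
    ∑ p ∈ C1 ∩ C2 ∩ C3ᶜ,
      ∑ q ∈ (C1ᶜ ∩ C2ᶜ ∩ C3) ∪ (C1 ∩ C2ᶜ ∩ C3) ∪ (C1ᶜ ∩ C2 ∩ C3) ∪ (C1 ∩ C2 ∩ C3)
              ∪ (C1ᶜ ∩ C2ᶜ ∩ C3ᶜ), w p q ≤ 2 := by
  obtain ⟨⟨ha1, ha2⟩, ha3⟩ : (a ∈ C1 ∧ a ∉ C2) ∧ a ∉ C3 := by
    simpa only [mem_inter, mem_compl] using ha
  obtain ⟨⟨hb1, hb2⟩, hb3⟩ : (b ∉ C1 ∧ b ∈ C2) ∧ b ∉ C3 := by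
    simpa only [mem_inter, mem_compl] using hb
  obtain ⟨⟨hc1m, hc2m⟩, hc3m⟩ : (c ∉ C1 ∧ c ∉ C2) ∧ c ∈ C3 := by
    simpa only [mem_inter, mem_compl] using hc
  -- Steiner-cut lower bounds
  have hAlow : lam ≤ cutCap w (C1 ∩ C2ᶜ ∩ C3ᶜ) := by
    refine hlam_min _ ⟨⟨a, mem_inter.mpr ⟨?_, haS⟩⟩, ⟨c, mem_sdiff.mpr ⟨hcS, ?_⟩⟩⟩
    · simp only [mem_inter, mem_compl]; tauto
    · simp only [mem_inter, mem_compl]; tauto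
  have hBlow : lam ≤ cutCap w (C1ᶜ ∩ C2 ∩ C3ᶜ) := by
    refine hlam_min _ ⟨⟨b, mem_inter.mpr ⟨?_, hbS⟩⟩, ⟨c, mem_sdiff.mpr ⟨hcS, ?_⟩⟩⟩
    · simp only [mem_inter, mem_compl]; tauto
    · simp only [mem_inter, mem_compl]; tauto
  have h31 : lam ≤ cutCap w (C3 \ C1) := by
    refine hlam_min _ ⟨⟨c, mem_inter.mpr ⟨mem_sdiff.mpr ⟨hc3m, hc1m⟩, hcS⟩⟩,
      ⟨a, mem_sdiff.mpr ⟨haS, ?_⟩⟩⟩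
    simp only [mem_sdiff]; tauto
  have h32 : lam ≤ cutCap w (C3 \ C2) := by
    refine hlam_min _ ⟨⟨c, mem_inter.mpr ⟨mem_sdiff.mpr ⟨hc3m, hc2m⟩, hcS⟩⟩,
      ⟨a, mem_sdiff.mpr ⟨haS, ?_⟩⟩⟩
    simp only [mem_sdiff]; tauto
  -- set identities
  have hAP : (C1 ∩ C2ᶜ ∩ C3ᶜ) ∪ (C1 ∩ C2 ∩ C3ᶜ) = C1 \ C3 := by
    ext z
    simp only [mem_union, mem_inter, mem_compl, mem_sdiff]
    by_cases h1' : z ∈ C1 <;> by_cases h2' : z ∈ C2 <;> by_cases h3' : z ∈ C3 <;>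
      simp [h1', h2', h3']
  have hBP : (C1ᶜ ∩ C2 ∩ C3ᶜ) ∪ (C1 ∩ C2 ∩ C3ᶜ) = C2 \ C3 := by
    ext z
    simp only [mem_union, mem_inter, mem_compl, mem_sdiff]
    by_cases h1' : z ∈ C1 <;> by_cases h2' : z ∈ C2 <;> by_cases h3' : z ∈ C3 <;>
      simp [h1', h2', h3']
  have dAP : Disjoint (C1 ∩ C2ᶜ ∩ C3ᶜ) (C1 ∩ C2 ∩ C3ᶜ) := Finset.disjoint_left.mpr (by
    intro z h1' h2'
    simp only [mem_inter, mem_compl] at h1' h2'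
    tauto)
  have dBP : Disjoint (C1ᶜ ∩ C2 ∩ C3ᶜ) (C1 ∩ C2 ∩ C3ᶜ) := Finset.disjoint_left.mpr (by
    intro z h1' h2'
    simp only [mem_inter, mem_compl] at h1' h2'
    tauto)
  have hPc : (C1 ∩ C2 ∩ C3ᶜ)ᶜ = (C1 ∩ C2ᶜ ∩ C3ᶜ) ∪ ((C1ᶜ ∩ C2 ∩ C3ᶜ) ∪
      ((C1ᶜ ∩ C2ᶜ ∩ C3) ∪ (C1 ∩ C2ᶜ ∩ C3) ∪ (C1ᶜ ∩ C2 ∩ C3) ∪ (C1 ∩ C2 ∩ C3)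
        ∪ (C1ᶜ ∩ C2ᶜ ∩ C3ᶜ))) := by
    ext z
    simp only [mem_union, mem_inter, mem_compl]
    by_cases h1' : z ∈ C1 <;> by_cases h2' : z ∈ C2 <;> by_cases h3' : z ∈ C3 <;>
      simp [h1', h2', h3']
  have dA_BR : Disjoint (C1 ∩ C2ᶜ ∩ C3ᶜ) ((C1ᶜ ∩ C2 ∩ C3ᶜ) ∪
      ((C1ᶜ ∩ C2ᶜ ∩ C3) ∪ (C1 ∩ C2ᶜ ∩ C3) ∪ (C1ᶜ ∩ C2 ∩ C3) ∪ (C1 ∩ C2 ∩ C3)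
        ∪ (C1ᶜ ∩ C2ᶜ ∩ C3ᶜ))) := Finset.disjoint_left.mpr (by
    intro z h1' h2'
    simp only [mem_union, mem_inter, mem_compl] at h1' h2'
    tauto)
  have dB_R : Disjoint (C1ᶜ ∩ C2 ∩ C3ᶜ)
      ((C1ᶜ ∩ C2ᶜ ∩ C3) ∪ (C1 ∩ C2ᶜ ∩ C3) ∪ (C1ᶜ ∩ C2 ∩ C3) ∪ (C1 ∩ C2 ∩ C3)
        ∪ (C1ᶜ ∩ C2ᶜ ∩ C3ᶜ)) := Finset.disjoint_left.mpr (by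
    intro z h1' h2'
    simp only [mem_union, mem_inter, mem_compl] at h1' h2'
    tauto)
  -- capacity identities
  have e1 : cutCap w (C1 ∩ C2ᶜ ∩ C3ᶜ) + cutCap w (C1 ∩ C2 ∩ C3ᶜ)
      = cutCap w (C1 \ C3) + 2 * dd w (C1 ∩ C2ᶜ ∩ C3ᶜ) (C1 ∩ C2 ∩ C3ᶜ) := by
    rw [← hAP]; exact cap_union w hsym _ _ dAP
  have e2 : cutCap w (C1ᶜ ∩ C2 ∩ C3ᶜ) + cutCap w (C1 ∩ C2 ∩ C3ᶜ)
      = cutCap w (C2 \ C3) + 2 * dd w (C1ᶜ ∩ C2 ∩ C3ᶜ) (C1 ∩ C2 ∩ C3ᶜ) := by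
    rw [← hBP]; exact cap_union w hsym _ _ dBP
  have eP : cutCap w (C1 ∩ C2 ∩ C3ᶜ) = dd w (C1 ∩ C2 ∩ C3ᶜ) (C1 ∩ C2ᶜ ∩ C3ᶜ)
      + (dd w (C1 ∩ C2 ∩ C3ᶜ) (C1ᶜ ∩ C2 ∩ C3ᶜ)
        + dd w (C1 ∩ C2 ∩ C3ᶜ) ((C1ᶜ ∩ C2ᶜ ∩ C3) ∪ (C1 ∩ C2ᶜ ∩ C3) ∪ (C1ᶜ ∩ C2 ∩ C3)
          ∪ (C1 ∩ C2 ∩ C3) ∪ (C1ᶜ ∩ C2ᶜ ∩ C3ᶜ))) := by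
    rw [cutCap_eq_dd, hPc, dd_right w _ dA_BR, dd_right w _ dB_R]
  have sA : dd w (C1 ∩ C2 ∩ C3ᶜ) (C1 ∩ C2ᶜ ∩ C3ᶜ)
      = dd w (C1 ∩ C2ᶜ ∩ C3ᶜ) (C1 ∩ C2 ∩ C3ᶜ) := dd_symm w hsym _ _
  have sB : dd w (C1 ∩ C2 ∩ C3ᶜ) (C1ᶜ ∩ C2 ∩ C3ᶜ)
      = dd w (C1ᶜ ∩ C2 ∩ C3ᶜ) (C1 ∩ C2 ∩ C3ᶜ) := dd_symm w hsym _ _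
  have p1 : cutCap w (C1 \ C3) + cutCap w (C3 \ C1) ≤ cutCap w C1 + cutCap w C3 :=
    cap_posi w hsym C1 C3
  have p2 : cutCap w (C2 \ C3) + cutCap w (C3 \ C2) ≤ cutCap w C2 + cutCap w C3 :=
    cap_posi w hsym C2 C3
  have hcap1 : cutCap w C1 = lam + 1 := h1.2
  have hcap2 : cutCap w C2 = lam + 1 := h2.2
  have hcap3 : cutCap w C3 = lam + 1 := h3.2
  show dd w (C1 ∩ C2 ∩ C3ᶜ) ((C1ᶜ ∩ C2ᶜ ∩ C3) ∪ (C1 ∩ C2ᶜ ∩ C3) ∪ (C1ᶜ ∩ C2 ∩ C3)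
    ∪ (C1 ∩ C2 ∩ C3) ∪ (C1ᶜ ∩ C2ᶜ ∩ C3ᶜ)) ≤ 2
  omega

end Paper
end

section
/- Assume c(A) ≥ 4 for every set A with ∅ ≠ A ⊊ V (the capacity of the global mincut is at least 4). Let W be a (λ_S+1) class, let s ∈ S ∩ W and u ∈ W, and let C1, C2, C3 be pairwise distinct nearest (λ_S+1) cuts of u containing s. Then no vertex of W lies outside C1 ∪ C2 ∪ C3, i.e., W ⊆ C1 ∪ C2 ∪ C3. -/
open Finset

namespace Paper

variable {α : Type*} [Fintype α] [DecidableEq α]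

/-- Symmetrized double-sum version of the cut capacity. -/
private def ds (w : α → α → ℕ) (A : Finset α) : ℕ :=
  ∑ u : α, ∑ v : α, if (u ∈ A ↔ v ∈ A) then 0 else w u v

private lemma ds_eq (w : α → α → ℕ) (hsym : ∀ u v, w u v = w v u) (A : Finset α) :
    ds w A = 2 * cutCap w A := by
  have key : ∀ u : α, (∑ v : α, if (u ∈ A ↔ v ∈ A) then 0 else w u v)
      = (if u ∈ A then ∑ v ∈ Aᶜ, w u v else ∑ v ∈ A, w u v) := by
    intro u
    by_cases hu : u ∈ A
    · rw [if_pos hu, ← Finset.sum_add_sum_compl A]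
      have h0 : (∑ v ∈ A, if (u ∈ A ↔ v ∈ A) then 0 else w u v) = 0 :=
        Finset.sum_eq_zero fun v hv => if_pos (iff_of_true hu hv)
      have h1 : (∑ v ∈ Aᶜ, if (u ∈ A ↔ v ∈ A) then 0 else w u v) = ∑ v ∈ Aᶜ, w u v :=
        Finset.sum_congr rfl fun v hv => if_neg (by
          simp only [Finset.mem_compl] at hv; tauto)
      rw [h0, h1, zero_add]
    · rw [if_neg hu, ← Finset.sum_add_sum_compl A]
      have h0 : (∑ v ∈ Aᶜ, if (u ∈ A ↔ v ∈ A) then 0 else w u v) = 0 :=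
        Finset.sum_eq_zero fun v hv => if_pos (iff_of_false hu (by
          simp only [Finset.mem_compl] at hv; exact hv))
      have h1 : (∑ v ∈ A, if (u ∈ A ↔ v ∈ A) then 0 else w u v) = ∑ v ∈ A, w u v :=
        Finset.sum_congr rfl fun v hv => if_neg (by tauto)
      rw [h0, h1, add_zero]
  have cross : (∑ u ∈ Aᶜ, ∑ v ∈ A, w u v) = cutCap w A := by
    rw [Finset.sum_comm]
    exact Finset.sum_congr rfl fun v _ => Finset.sum_congr rfl fun u _ => hsym u v
  calc ds w A = ∑ u : α, (if u ∈ A then ∑ v ∈ Aᶜ, w u v else ∑ v ∈ A, w u v) :=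
        Finset.sum_congr rfl fun u _ => key u
    _ = (∑ u ∈ A, (if u ∈ A then ∑ v ∈ Aᶜ, w u v else ∑ v ∈ A, w u v))
        + ∑ u ∈ Aᶜ, (if u ∈ A then ∑ v ∈ Aᶜ, w u v else ∑ v ∈ A, w u v) :=
        (Finset.sum_add_sum_compl A _).symm
    _ = (∑ u ∈ A, ∑ v ∈ Aᶜ, w u v) + ∑ u ∈ Aᶜ, ∑ v ∈ A, w u v := by
        congr 1
        · exact Finset.sum_congr rfl fun u hu => if_pos hu
        · exact Finset.sum_congr rfl fun u hu => if_neg (by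
            simp only [Finset.mem_compl] at hu; exact hu)
    _ = 2 * cutCap w A := by rw [cross]; unfold cutCap; ring

private lemma submod (w : α → α → ℕ) (hsym : ∀ u v, w u v = w v u) (A B : Finset α) :
    cutCap w (A ∩ B) + cutCap w (A ∪ B) ≤ cutCap w A + cutCap w B := by
  have key : ds w (A ∩ B) + ds w (A ∪ B) ≤ ds w A + ds w B := by
    unfold ds
    simp only [← Finset.sum_add_distrib]
    apply Finset.sum_le_sum
    intro u _
    apply Finset.sum_le_sum
    intro v _
    by_cases h1 : u ∈ A <;> by_cases h2 : u ∈ B <;> by_cases h3 : v ∈ A <;>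
      by_cases h4 : v ∈ B <;>
      simp [Finset.mem_inter, Finset.mem_union, h1, h2, h3, h4] <;> omega
  rw [ds_eq w hsym, ds_eq w hsym, ds_eq w hsym, ds_eq w hsym] at key
  omega

private lemma main_ineq (w : α → α → ℕ) (hsym : ∀ u v, w u v = w v u)
    (C1 C2 C3 : Finset α) :
    cutCap w ((C1 ∪ C2 ∪ C3)ᶜ) + cutCap w ((C1 ∩ C2) \ C3) + cutCap w ((C1 ∩ C3) \ C2)
      + cutCap w ((C2 ∩ C3) \ C1)
      ≤ cutCap w C1 + cutCap w C2 + cutCap w C3 := by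
  have key : ds w ((C1 ∪ C2 ∪ C3)ᶜ) + ds w ((C1 ∩ C2) \ C3) + ds w ((C1 ∩ C3) \ C2)
      + ds w ((C2 ∩ C3) \ C1) ≤ ds w C1 + ds w C2 + ds w C3 := by
    unfold ds
    simp only [← Finset.sum_add_distrib]
    apply Finset.sum_le_sum
    intro u _
    apply Finset.sum_le_sum
    intro v _
    by_cases h1 : u ∈ C1 <;> by_cases h2 : u ∈ C2 <;> by_cases h3 : u ∈ C3 <;>
      by_cases h4 : v ∈ C1 <;> by_cases h5 : v ∈ C2 <;> by_cases h6 : v ∈ C3 <;>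
      simp [Finset.mem_inter, Finset.mem_union, Finset.mem_sdiff, Finset.mem_compl,
        h1, h2, h3, h4, h5, h6] <;> omega
  rw [ds_eq w hsym, ds_eq w hsym, ds_eq w hsym, ds_eq w hsym, ds_eq w hsym,
    ds_eq w hsym, ds_eq w hsym] at key
  omega

/-- If the global mincut capacity is at least 4, the complement of the union of any
three distinct nearest (λ_S+1) cuts of a vertex contains no vertex of its class. -/
theorem three_nearest_cuts_cover_class
    (w : α → α → ℕ) (hsym : ∀ u v, w u v = w v u) (hdiag : ∀ u, w u u = 0)
    (hglobal : ∀ A : Finset α, A.Nonempty → A ≠ Finset.univ → 4 ≤ cutCap w A)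
    (S : Finset α) (hScard : 2 ≤ S.card) (lam : ℕ)
    (hlam_ex : ∃ C : Finset α, IsSteinerCut S C ∧ cutCap w C = lam)
    (hlam_min : ∀ C : Finset α, IsSteinerCut S C → lam ≤ cutCap w C)
    (W : Finset α) (hW : IsClass w S lam W)
    (s : α) (hsS : s ∈ S) (hsW : s ∈ W) (u : α) (huW : u ∈ W)
    (C1 C2 C3 : Finset α) (h12 : C1 ≠ C2) (h13 : C1 ≠ C3) (h23 : C2 ≠ C3)
    (hC1 : IsNearestPlusOneCut w S lam s u C1)
    (hC2 : IsNearestPlusOneCut w S lam s u C2)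
    (hC3 : IsNearestPlusOneCut w S lam s u C3) :
    W ⊆ C1 ∪ C2 ∪ C3 := by
  intro x hxW
  by_contra hx
  simp only [Finset.mem_union, not_or] at hx
  obtain ⟨⟨hx1, hx2⟩, hx3⟩ := hx
  -- class property: every S-mincut containing s contains all of W
  obtain ⟨u0, hu0⟩ := hW
  have hWmem : ∀ D : Finset α, IsSMincut w S lam D → s ∈ D → ∀ v ∈ W, v ∈ D := by
    intro D hD hsD v hv
    have h1 := (hu0 s).mp hsW D hD
    have h2 := (hu0 v).mp hv D hD
    unfold Separates at h1 h2
    by_cases hv' : v ∈ D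
    · exact hv'
    · by_cases h0 : u0 ∈ D <;> tauto
  -- pairwise: the Steiner set is contained in the union of any two of the cuts
  have pair : ∀ A B : Finset α, IsNearestPlusOneCut w S lam s u A →
      IsNearestPlusOneCut w S lam s u B → A ≠ B → x ∉ A → x ∉ B → S ⊆ A ∪ B := by
    intro A B hA hB hne hxA hxB
    obtain ⟨⟨⟨hAne, hAd⟩, hAcap⟩, hsA, huA, hnearA⟩ := hA
    obtain ⟨⟨⟨hBne, hBd⟩, hBcap⟩, hsB, huB, hnearB⟩ := hB
    have hAB : ¬ A ⊆ B := by
      intro hsub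
      exact hnearB A ⟨⟨hAne, hAd⟩, hAcap⟩ hsA huA
        (Finset.ssubset_iff_subset_ne.mpr ⟨hsub, hne⟩)
    -- the intersection is a Steiner cut
    have hsI : s ∈ A ∩ B := Finset.mem_inter.mpr ⟨hsA, hsB⟩
    have huI : u ∈ A ∩ B := Finset.mem_inter.mpr ⟨huA, huB⟩
    have hIst : IsSteinerCut S (A ∩ B) := by
      refine ⟨⟨s, Finset.mem_inter.mpr ⟨hsI, hsS⟩⟩, ?_⟩
      obtain ⟨t, ht⟩ := hAd
      rw [Finset.mem_sdiff] at ht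
      exact ⟨t, Finset.mem_sdiff.mpr ⟨ht.1, fun hmem =>
        ht.2 (Finset.mem_inter.mp hmem).1⟩⟩
    have hIge : lam ≤ cutCap w (A ∩ B) := hlam_min _ hIst
    have hInelam : cutCap w (A ∩ B) ≠ lam := by
      intro h
      have hxI : x ∈ A ∩ B := hWmem (A ∩ B) ⟨hIst, h⟩ hsI x hxW
      exact hxA (Finset.mem_inter.mp hxI).1
    have hInelam1 : cutCap w (A ∩ B) ≠ lam + 1 := by
      intro h
      refine hnearA (A ∩ B) ⟨hIst, h⟩ hsI huI
        (Finset.ssubset_iff_subset_ne.mpr ⟨Finset.inter_subset_left, ?_⟩)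
      intro heq
      exact hAB (Finset.inter_eq_left.mp heq)
    have hIge2 : lam + 2 ≤ cutCap w (A ∩ B) := by omega
    have hsubm := submod w hsym A B
    have hUle : cutCap w (A ∪ B) ≤ lam := by omega
    intro t htS
    by_contra htU
    have hUst : IsSteinerCut S (A ∪ B) :=
      ⟨⟨s, Finset.mem_inter.mpr ⟨Finset.mem_union_left _ hsA, hsS⟩⟩,
        ⟨t, Finset.mem_sdiff.mpr ⟨htS, htU⟩⟩⟩
    have hUeq : cutCap w (A ∪ B) = lam := le_antisymm hUle (hlam_min _ hUst)
    have hxU : x ∈ A ∪ B := hWmem (A ∪ B) ⟨hUst, hUeq⟩ (Finset.mem_union_left _ hsA) x hxW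
    rw [Finset.mem_union] at hxU
    tauto
  have hS12 : S ⊆ C1 ∪ C2 := pair C1 C2 hC1 hC2 h12 hx1 hx2
  have hS13 : S ⊆ C1 ∪ C3 := pair C1 C3 hC1 hC3 h13 hx1 hx3
  have hS23 : S ⊆ C2 ∪ C3 := pair C2 C3 hC2 hC3 h23 hx2 hx3
  -- lower bounds on the three "double-intersection" regions
  have hreg : ∀ A B C : Finset α, IsNearestPlusOneCut w S lam s u A →
      IsNearestPlusOneCut w S lam s u B → IsNearestPlusOneCut w S lam s u C →
      S ⊆ A ∪ C → S ⊆ B ∪ C → lam ≤ cutCap w ((A ∩ B) \ C) := by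
    intro A B C hA hB hC hAC hBC
    obtain ⟨t, ht⟩ := hC.1.1.2
    rw [Finset.mem_sdiff] at ht
    have htA : t ∈ A := by
      have := hAC ht.1
      rw [Finset.mem_union] at this
      tauto
    have htB : t ∈ B := by
      have := hBC ht.1
      rw [Finset.mem_union] at this
      tauto
    refine hlam_min _ ⟨⟨t, ?_⟩, ⟨s, ?_⟩⟩
    · exact Finset.mem_inter.mpr ⟨Finset.mem_sdiff.mpr
        ⟨Finset.mem_inter.mpr ⟨htA, htB⟩, ht.2⟩, ht.1⟩
    · refine Finset.mem_sdiff.mpr ⟨hsS, ?_⟩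
      rw [Finset.mem_sdiff]
      push_neg
      intro _
      exact hC.2.1
  have hR12 : lam ≤ cutCap w ((C1 ∩ C2) \ C3) := hreg C1 C2 C3 hC1 hC2 hC3 hS13 hS23
  have hR13 : lam ≤ cutCap w ((C1 ∩ C3) \ C2) := hreg C1 C3 C2 hC1 hC3 hC2 hS12 (by rw [Finset.union_comm]; exact hS23)
  have hR23 : lam ≤ cutCap w ((C2 ∩ C3) \ C1) := hreg C2 C3 C1 hC2 hC3 hC1 (by rw [Finset.union_comm]; exact hS12) (by rw [Finset.union_comm]; exact hS13)
  -- the outside region has capacity at least 4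
  have hR0 : 4 ≤ cutCap w ((C1 ∪ C2 ∪ C3)ᶜ) := by
    apply hglobal
    · exact ⟨x, by simp [Finset.mem_compl, Finset.mem_union, hx1, hx2, hx3]⟩
    · intro h
      have : s ∈ (C1 ∪ C2 ∪ C3)ᶜ := h ▸ Finset.mem_univ s
      rw [Finset.mem_compl] at this
      exact this (Finset.mem_union_left _ (Finset.mem_union_left _ hC1.2.1))
  have hmain := main_ineq w hsym C1 C2 C3
  have hc1 : cutCap w C1 = lam + 1 := hC1.1.2
  have hc2 : cutCap w C2 = lam + 1 := hC2.1.2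
  have hc3 : cutCap w C3 = lam + 1 := hC3.1.2
  omega

end Paper
end

section
/- (Property P2) Let W be a (λ_S+1) class, let s ∈ S ∩ W and u ∈ W. Assume that there is no S-mincut D with s ∈ D such that two distinct Steiner vertices lie outside D. Let C ≠ C' be nearest (λ_S+1) cuts of u containing s. Then there do not exist two distinct Steiner vertices t1 ≠ t2 with t1, t2 ∉ C ∪ C'. -/
open Finset

namespace Paper

variable {α : Type*} [Fintype α] [DecidableEq α]

lemma cutCap_submodular (w : α → α → ℕ) (A B : Finset α) :
    cutCap w (A ∩ B) + cutCap w (A ∪ B) ≤ cutCap w A + cutCap w B := by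
  simp only [cutCap_eq]
  rw [← Finset.sum_add_distrib, ← Finset.sum_add_distrib]
  apply Finset.sum_le_sum; intro x _
  rw [← Finset.sum_add_distrib, ← Finset.sum_add_distrib]
  apply Finset.sum_le_sum; intro v _
  by_cases ha : x ∈ A <;> by_cases hb : x ∈ B <;> by_cases hc : v ∈ A <;> by_cases hd : v ∈ B <;>
    simp [ha, hb, hc, hd]

/-- Property P2. -/
theorem property_P2
    (w : α → α → ℕ) (hsym : ∀ u v, w u v = w v u) (hdiag : ∀ u, w u u = 0)
    (S : Finset α) (hScard : 2 ≤ S.card) (lam : ℕ)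
    (hlam_ex : ∃ C : Finset α, IsSteinerCut S C ∧ cutCap w C = lam)
    (hlam_min : ∀ C : Finset α, IsSteinerCut S C → lam ≤ cutCap w C)
    (W : Finset α) (hW : IsClass w S lam W)
    (s : α) (hsS : s ∈ S) (hsW : s ∈ W) (u : α) (huW : u ∈ W)
    (hNoD : ¬ ∃ D : Finset α, IsSMincut w S lam D ∧ s ∈ D ∧
        ∃ t1 ∈ S, ∃ t2 ∈ S, t1 ≠ t2 ∧ t1 ∉ D ∧ t2 ∉ D)
    (C C' : Finset α) (hne : C ≠ C')
    (hC : IsNearestPlusOneCut w S lam s u C)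
    (hC' : IsNearestPlusOneCut w S lam s u C') :
    ¬ ∃ t1 ∈ S, ∃ t2 ∈ S, t1 ≠ t2 ∧ t1 ∉ C ∪ C' ∧ t2 ∉ C ∪ C' := by
  rintro ⟨t1, ht1S, t2, ht2S, ht12, ht1, ht2⟩
  obtain ⟨⟨hCsc, hCcap⟩, hsC, huC, hCnear⟩ := hC
  obtain ⟨⟨hC'sc, hC'cap⟩, hsC', huC', hC'near⟩ := hC'
  have hsI : s ∈ C ∩ C' := Finset.mem_inter.2 ⟨hsC, hsC'⟩
  have huI : u ∈ C ∩ C' := Finset.mem_inter.2 ⟨huC, huC'⟩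
  have ht1I : t1 ∉ C ∩ C' := fun h => ht1 (Finset.mem_union_left _ (Finset.mem_inter.1 h).1)
  have ht2I : t2 ∉ C ∩ C' := fun h => ht2 (Finset.mem_union_left _ (Finset.mem_inter.1 h).1)
  have hIsc : IsSteinerCut S (C ∩ C') :=
    ⟨⟨s, Finset.mem_inter.2 ⟨hsI, hsS⟩⟩, ⟨t1, Finset.mem_sdiff.2 ⟨ht1S, ht1I⟩⟩⟩
  have hUsc : IsSteinerCut S (C ∪ C') :=
    ⟨⟨s, Finset.mem_inter.2 ⟨Finset.mem_union_left _ hsC, hsS⟩⟩,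
     ⟨t1, Finset.mem_sdiff.2 ⟨ht1S, ht1⟩⟩⟩
  have hsub := cutCap_submodular w C C'
  have hI := hlam_min _ hIsc
  have hU := hlam_min _ hUsc
  rw [hCcap, hC'cap] at hsub
  by_cases hUlam : cutCap w (C ∪ C') = lam
  · exact hNoD ⟨C ∪ C', ⟨hUsc, hUlam⟩, Finset.mem_union_left _ hsC,
      t1, ht1S, t2, ht2S, ht12, ht1, ht2⟩
  -- cutCap (C ∩ C') is lam or lam + 1
  rcases (by omega : cutCap w (C ∩ C') = lam ∨ cutCap w (C ∩ C') = lam + 1) with h | h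
  · exact hNoD ⟨C ∩ C', ⟨hIsc, h⟩, hsI, t1, ht1S, t2, ht2S, ht12, ht1I, ht2I⟩
  · have hIplus : IsPlusOneCut w S lam (C ∩ C') := ⟨hIsc, h⟩
    by_cases hIC : C ∩ C' = C
    · -- then C ⊆ C', and C ≠ C', so C ⊂ C'
      have hCC' : C ⊆ C' := fun x hx => (Finset.mem_inter.1 (hIC ▸ hx)).2
      exact hC'near C ⟨hCsc, hCcap⟩ hsC huC (lt_of_le_of_ne hCC' hne)
    · exact hCnear (C ∩ C') hIplus hsI huI
        (lt_of_le_of_ne (Finset.inter_subset_left) hIC)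

end Paper
end

section
/- Assume the multigraph is connected. Let W be a (λ_S+1) class, let s ∈ S ∩ W and u ∈ W, and assume that there is no S-mincut D with s ∈ D such that two distinct Steiner vertices lie outside D. Call a nearest (λ_S+1) cut C of u containing s an m-cut if at least two distinct Steiner vertices lie outside C and moreover W∖C ≠ ∅. Then for any three pairwise distinct m-cuts C1, C2, C3 of u, there is no Steiner vertex t with t ∉ C1 ∪ C2 ∪ C3; equivalently, every Steiner vertex lies outside at most two m-cuts of u. -/
open Finset

namespace Paper

variable {α : Type*} [Fintype α] [DecidableEq α]

/-- An m-cut of `u`: a nearest (λ_S+1) cut of `u` containing `s` with at least two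
distinct Steiner vertices outside it, which moreover subdivides the class `W`. -/
def IsMCut (w : α → α → ℕ) (S : Finset α) (lam : ℕ) (s u : α) (W : Finset α)
    (C : Finset α) : Prop :=
  IsNearestPlusOneCut w S lam s u C ∧
    (∃ t1 ∈ S, ∃ t2 ∈ S, t1 ≠ t2 ∧ t1 ∉ C ∧ t2 ∉ C) ∧ (W \ C).Nonempty

set_option linter.unusedSectionVars false

def ecap (w : α → α → ℕ) (X Y : Finset α) : ℕ := ∑ x ∈ X, ∑ y ∈ Y, w x y

lemma ecap_comm (w : α → α → ℕ) (hsym : ∀ u v, w u v = w v u) (X Y : Finset α) :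
    ecap w X Y = ecap w Y X := by
  unfold ecap
  rw [Finset.sum_comm]
  exact Finset.sum_congr rfl fun y _ => Finset.sum_congr rfl fun x _ => hsym x y

lemma ecap_union_left (w : α → α → ℕ) {X Y : Finset α} (Z : Finset α) (h : Disjoint X Y) :
    ecap w (X ∪ Y) Z = ecap w X Z + ecap w Y Z := Finset.sum_union h

lemma ecap_union_right (w : α → α → ℕ) (X : Finset α) {Y Z : Finset α} (h : Disjoint Y Z) :
    ecap w X (Y ∪ Z) = ecap w X Y + ecap w X Z := by
  unfold ecap
  rw [← Finset.sum_add_distrib]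
  exact Finset.sum_congr rfl fun x _ => Finset.sum_union h

lemma ecap_mono (w : α → α → ℕ) {X X' Y Y' : Finset α} (hX : X ⊆ X') (hY : Y ⊆ Y') :
    ecap w X Y ≤ ecap w X' Y' := by
  unfold ecap
  calc ∑ x ∈ X, ∑ y ∈ Y, w x y
      ≤ ∑ x ∈ X, ∑ y ∈ Y', w x y :=
        Finset.sum_le_sum fun x _ => Finset.sum_le_sum_of_subset hY
    _ ≤ _ := Finset.sum_le_sum_of_subset hX

lemma ecap_union_le (w : α → α → ℕ) (X Y Z : Finset α) :
    ecap w (X ∪ Y) Z ≤ ecap w X Z + ecap w Y Z := by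
  have h1 : X ∪ Y = X ∪ (Y \ X) := by ext a; simp
  rw [h1, ecap_union_left w Z Finset.disjoint_sdiff]
  exact Nat.add_le_add_left (ecap_mono w Finset.sdiff_subset (Finset.Subset.refl Z)) _

lemma ecap_split (w : α → α → ℕ) {X1 X2 Y1 Y2 : Finset α}
    (h12 : Disjoint X1 X2) (h34 : Disjoint Y1 Y2) :
    ecap w (X1 ∪ X2) (Y1 ∪ Y2)
      = ecap w X1 Y1 + ecap w X1 Y2 + (ecap w X2 Y1 + ecap w X2 Y2) := by
  rw [ecap_union_left w _ h12, ecap_union_right w _ h34, ecap_union_right w _ h34]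

/-- Submodularity and posimodularity identities for cut capacities. -/
lemma cut_identities (w : α → α → ℕ) (hsym : ∀ u v, w u v = w v u) (A B : Finset α) :
    cutCap w A + cutCap w B
        = cutCap w (A \ B) + cutCap w (B \ A) + 2 * ecap w (A ∩ B) ((A ∪ B)ᶜ) ∧
    cutCap w A + cutCap w B
        = cutCap w (A ∩ B) + cutCap w (A ∪ B) + 2 * ecap w (A \ B) (B \ A) := by
  have hA : A = (A ∩ B) ∪ (A \ B) := by ext a; simp; tauto
  have hAc : Aᶜ = (B \ A) ∪ (A ∪ B)ᶜ := by ext a; simp; tauto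
  have hB : B = (A ∩ B) ∪ (B \ A) := by ext a; simp; tauto
  have hBc : Bᶜ = (A \ B) ∪ (A ∪ B)ᶜ := by ext a; simp; tauto
  have hIc : (A ∩ B)ᶜ = (A \ B) ∪ ((B \ A) ∪ (A ∪ B)ᶜ) := by ext a; simp; tauto
  have hU : A ∪ B = (A ∩ B) ∪ ((A \ B) ∪ (B \ A)) := by ext a; simp; tauto
  have hDc : (A \ B)ᶜ = (A ∩ B) ∪ ((B \ A) ∪ (A ∪ B)ᶜ) := by ext a; simp; tauto
  have hDc' : (B \ A)ᶜ = (A ∩ B) ∪ ((A \ B) ∪ (A ∪ B)ᶜ) := by ext a; simp; tauto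
  have d12 : Disjoint (A ∩ B) (A \ B) := by rw [Finset.disjoint_left]; intro a h1 h2; simp at *; tauto
  have d13 : Disjoint (A ∩ B) (B \ A) := by rw [Finset.disjoint_left]; intro a h1 h2; simp at *; tauto
  have d14 : Disjoint (A ∩ B) ((A ∪ B)ᶜ) := by rw [Finset.disjoint_left]; intro a h1 h2; simp at *; tauto
  have d23 : Disjoint (A \ B) (B \ A) := by rw [Finset.disjoint_left]; intro a h1 h2; simp at *; tauto
  have d24 : Disjoint (A \ B) ((A ∪ B)ᶜ) := by rw [Finset.disjoint_left]; intro a h1 h2; simp at *; tauto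
  have d34 : Disjoint (B \ A) ((A ∪ B)ᶜ) := by rw [Finset.disjoint_left]; intro a h1 h2; simp at *; tauto
  have d2_34 : Disjoint (A \ B) ((B \ A) ∪ (A ∪ B)ᶜ) := Finset.disjoint_union_right.mpr ⟨d23, d24⟩
  have d3_24 : Disjoint (B \ A) ((A \ B) ∪ (A ∪ B)ᶜ) := Finset.disjoint_union_right.mpr ⟨d23.symm, d34⟩
  have d1_23 : Disjoint (A ∩ B) ((A \ B) ∪ (B \ A)) := Finset.disjoint_union_right.mpr ⟨d12, d13⟩
  have eA : cutCap w A = ecap w (A ∩ B) (B \ A) + ecap w (A ∩ B) ((A ∪ B)ᶜ)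
      + (ecap w (A \ B) (B \ A) + ecap w (A \ B) ((A ∪ B)ᶜ)) := by
    calc cutCap w A = ecap w ((A ∩ B) ∪ (A \ B)) ((B \ A) ∪ (A ∪ B)ᶜ) := by
          rw [← hA, ← hAc]; rfl
      _ = _ := ecap_split w d12 d34
  have eB : cutCap w B = ecap w (A ∩ B) (A \ B) + ecap w (A ∩ B) ((A ∪ B)ᶜ)
      + (ecap w (B \ A) (A \ B) + ecap w (B \ A) ((A ∪ B)ᶜ)) := by
    calc cutCap w B = ecap w ((A ∩ B) ∪ (B \ A)) ((A \ B) ∪ (A ∪ B)ᶜ) := by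
          rw [← hB, ← hBc]; rfl
      _ = _ := ecap_split w d13 d24
  have eI : cutCap w (A ∩ B) = ecap w (A ∩ B) (A \ B)
      + (ecap w (A ∩ B) (B \ A) + ecap w (A ∩ B) ((A ∪ B)ᶜ)) := by
    calc cutCap w (A ∩ B) = ecap w (A ∩ B) ((A \ B) ∪ ((B \ A) ∪ (A ∪ B)ᶜ)) := by
          rw [← hIc]; rfl
      _ = _ := by rw [ecap_union_right w _ d2_34, ecap_union_right w _ d34]
  have eU : cutCap w (A ∪ B) = ecap w (A ∩ B) ((A ∪ B)ᶜ)
      + (ecap w (A \ B) ((A ∪ B)ᶜ) + ecap w (B \ A) ((A ∪ B)ᶜ)) := by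
    calc cutCap w (A ∪ B) = ecap w ((A ∩ B) ∪ ((A \ B) ∪ (B \ A))) ((A ∪ B)ᶜ) := by
          rw [← hU]; rfl
      _ = _ := by rw [ecap_union_left w _ d1_23, ecap_union_left w _ d23]
  have eD : cutCap w (A \ B) = ecap w (A \ B) (A ∩ B)
      + (ecap w (A \ B) (B \ A) + ecap w (A \ B) ((A ∪ B)ᶜ)) := by
    calc cutCap w (A \ B) = ecap w (A \ B) ((A ∩ B) ∪ ((B \ A) ∪ (A ∪ B)ᶜ)) := by
          rw [← hDc]; rfl
      _ = _ := by rw [ecap_union_right w _ (Finset.disjoint_union_right.mpr ⟨d13, d14⟩),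
          ecap_union_right w _ d34]
  have eD' : cutCap w (B \ A) = ecap w (B \ A) (A ∩ B)
      + (ecap w (B \ A) (A \ B) + ecap w (B \ A) ((A ∪ B)ᶜ)) := by
    calc cutCap w (B \ A) = ecap w (B \ A) ((A ∩ B) ∪ ((A \ B) ∪ (A ∪ B)ᶜ)) := by
          rw [← hDc']; rfl
      _ = _ := by rw [ecap_union_right w _ (Finset.disjoint_union_right.mpr ⟨d12, d14⟩),
          ecap_union_right w _ d24]
  rw [ecap_comm w hsym (B \ A) (A \ B)] at eB eD'
  rw [ecap_comm w hsym (A \ B) (A ∩ B)] at eD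
  rw [ecap_comm w hsym (B \ A) (A ∩ B)] at eD'
  constructor <;> omega



/-- Key facts about a pair of distinct m-cuts both avoiding the Steiner vertex `t`:
their union is an S-mincut, and no edges leave their intersection towards the
complement of their union. -/
lemma pair_key (w : α → α → ℕ) (hsym : ∀ u v, w u v = w v u)
    (S : Finset α) (lam : ℕ)
    (hlam_min : ∀ C : Finset α, IsSteinerCut S C → lam ≤ cutCap w C)
    (W : Finset α)
    (hclass : ∀ D, IsSMincut w S lam D → ∀ x ∈ W, ∀ y ∈ W, ¬ Separates D x y)
    (s : α) (hsS : s ∈ S) (hsW : s ∈ W) (u : α)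
    (hNoD : ¬ ∃ D : Finset α, IsSMincut w S lam D ∧ s ∈ D ∧
        ∃ t1 ∈ S, ∃ t2 ∈ S, t1 ≠ t2 ∧ t1 ∉ D ∧ t2 ∉ D)
    (t : α) (htS : t ∈ S)
    (C C' : Finset α) (hne : C ≠ C') (htC : t ∉ C) (htC' : t ∉ C')
    (hC : IsMCut w S lam s u W C) (hC' : IsMCut w S lam s u W C') :
    cutCap w (C ∪ C') = lam ∧ ecap w (C ∩ C') ((C ∪ C')ᶜ) = 0 := by
  obtain ⟨⟨⟨hStC, hcapC⟩, hsC, huC, hnearC⟩, ⟨t1, ht1S, t2, ht2S, hne12, ht1C, ht2C⟩, hWdC⟩ := hC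
  obtain ⟨⟨⟨hStC', hcapC'⟩, hsC', huC', hnearC'⟩, ⟨t1', ht1S', t2', ht2S', hne12', ht1C', ht2C'⟩,
    hWdC'⟩ := hC'
  -- intersection is a Steiner cut of capacity ≥ lam + 2
  have hStI : IsSteinerCut S (C ∩ C') :=
    ⟨⟨s, by simp [Finset.mem_inter, hsC, hsC', hsS]⟩,
     ⟨t, by simp [Finset.mem_sdiff, Finset.mem_inter, htS, htC]⟩⟩
  have hIge : lam ≤ cutCap w (C ∩ C') := hlam_min _ hStI
  have hIne : cutCap w (C ∩ C') ≠ lam := by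
    intro h
    exact hNoD ⟨C ∩ C', ⟨hStI, h⟩, Finset.mem_inter.mpr ⟨hsC, hsC'⟩, t1, ht1S, t2, ht2S, hne12,
      by simp [Finset.mem_inter, ht1C], by simp [Finset.mem_inter, ht2C]⟩
  have hIne1 : cutCap w (C ∩ C') ≠ lam + 1 := by
    intro h
    have hplus : IsPlusOneCut w S lam (C ∩ C') := ⟨hStI, h⟩
    have h1 := hnearC (C ∩ C') hplus (Finset.mem_inter.mpr ⟨hsC, hsC'⟩)
      (Finset.mem_inter.mpr ⟨huC, huC'⟩)
    have h2 := hnearC' (C ∩ C') hplus (Finset.mem_inter.mpr ⟨hsC, hsC'⟩)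
      (Finset.mem_inter.mpr ⟨huC, huC'⟩)
    have e1 : C ∩ C' = C := by
      by_contra hx
      exact h1 (Finset.ssubset_iff_subset_ne.mpr ⟨Finset.inter_subset_left, hx⟩)
    have e2 : C ∩ C' = C' := by
      by_contra hx
      exact h2 (Finset.ssubset_iff_subset_ne.mpr ⟨Finset.inter_subset_right, hx⟩)
    exact hne (e1.symm.trans e2)
  have hIge2 : lam + 2 ≤ cutCap w (C ∩ C') := by omega
  obtain ⟨hposi, hsubm⟩ := cut_identities w hsym C C'
  -- union is an S-mincut
  have hStU : IsSteinerCut S (C ∪ C') :=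
    ⟨⟨s, by simp [Finset.mem_inter, Finset.mem_union, hsC, hsS]⟩,
     ⟨t, by simp [Finset.mem_sdiff, Finset.mem_union, htS, htC, htC']⟩⟩
  have hUge : lam ≤ cutCap w (C ∪ C') := hlam_min _ hStU
  have hUeq : cutCap w (C ∪ C') = lam := by omega
  have hUmin : IsSMincut w S lam (C ∪ C') := ⟨hStU, hUeq⟩
  have hWU : ∀ x ∈ W, x ∈ C ∪ C' := by
    intro x hx
    by_contra hxn
    exact hclass _ hUmin s hsW x hx (Or.inl ⟨Finset.mem_union.mpr (Or.inl hsC), hxn⟩)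
  -- a Steiner vertex in C \ C'
  have hexT : ∀ (D E : Finset α), t ∉ D → t ∉ E → s ∈ D → IsSMincut w S lam (D ∪ E) →
      (∃ t1 ∈ S, ∃ t2 ∈ S, t1 ≠ t2 ∧ t1 ∉ E ∧ t2 ∉ E) → ∃ t', t' ∈ S ∧ t' ∈ D \ E := by
    intro D E htD htE hsD hmin ⟨a, haS, b, hbS, hab, haE, hbE⟩
    have hpick : ∃ t', t' ∈ S ∧ t' ≠ t ∧ t' ∉ E := by
      rcases eq_or_ne a t with rfl | hne1
      · exact ⟨b, hbS, fun h => hab h.symm, hbE⟩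
      · exact ⟨a, haS, hne1, haE⟩
    obtain ⟨t', ht'S, ht'net, ht'E⟩ := hpick
    have ht'D : t' ∈ D := by
      by_contra hcon
      exact hNoD ⟨D ∪ E, hmin, Finset.mem_union.mpr (Or.inl hsD), t, htS, t', ht'S,
        fun h => ht'net h.symm, by simp [Finset.mem_union, htD, htE],
        by simp [Finset.mem_union, hcon, ht'E]⟩
    exact ⟨t', ht'S, Finset.mem_sdiff.mpr ⟨ht'D, ht'E⟩⟩
  -- both side-differences have capacity ≥ lam + 1
  have hside : ∀ (D E : Finset α), t ∉ D → t ∉ E → s ∈ D → s ∈ E → IsSMincut w S lam (D ∪ E) →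
      (∃ t1 ∈ S, ∃ t2 ∈ S, t1 ≠ t2 ∧ t1 ∉ E ∧ t2 ∉ E) → (W \ E).Nonempty →
      (∀ x ∈ W, x ∈ D ∪ E) → lam + 1 ≤ cutCap w (D \ E) := by
    intro D E htD htE hsD hsE hmin htwo hWd hWDE
    obtain ⟨ta, htaS, htaD⟩ := hexT D E htD htE hsD hmin htwo
    obtain ⟨xs, hxs⟩ := hWd
    rw [Finset.mem_sdiff] at hxs
    have hxsD : xs ∈ D := by
      have := hWDE xs hxs.1
      rw [Finset.mem_union] at this
      tauto
    have hStD : IsSteinerCut S (D \ E) :=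
      ⟨⟨ta, Finset.mem_inter.mpr ⟨htaD, htaS⟩⟩,
       ⟨s, by simp [Finset.mem_sdiff, hsS, hsE]⟩⟩
    have hDge : lam ≤ cutCap w (D \ E) := hlam_min _ hStD
    have hDne : cutCap w (D \ E) ≠ lam := by
      intro h
      exact hclass _ ⟨hStD, h⟩ s hsW xs hxs.1
        (Or.inr ⟨Finset.mem_sdiff.mpr ⟨hxsD, hxs.2⟩, by simp [Finset.mem_sdiff, hsE]⟩)
    omega
  have hD1 : lam + 1 ≤ cutCap w (C \ C') :=
    hside C C' htC htC' hsC hsC' hUmin ⟨t1', ht1S', t2', ht2S', hne12', ht1C', ht2C'⟩ hWdC' hWU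
  have hUmin' : IsSMincut w S lam (C' ∪ C) := by rwa [Finset.union_comm]
  have hD2 : lam + 1 ≤ cutCap w (C' \ C) :=
    hside C' C htC' htC hsC' hsC hUmin' ⟨t1, ht1S, t2, ht2S, hne12, ht1C, ht2C⟩ hWdC
      (fun x hx => by rw [Finset.union_comm]; exact hWU x hx)
  exact ⟨hUeq, by omega⟩

/-- An m-cut is contained in the union of the other two (given that union is a mincut). -/
lemma mcut_subset_union (w : α → α → ℕ) (hsym : ∀ u v, w u v = w v u)
    (S : Finset α) (lam : ℕ)
    (hlam_min : ∀ C : Finset α, IsSteinerCut S C → lam ≤ cutCap w C)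
    (W : Finset α)
    (s : α) (hsS : s ∈ S) (u : α)
    (hNoD : ¬ ∃ D : Finset α, IsSMincut w S lam D ∧ s ∈ D ∧
        ∃ t1 ∈ S, ∃ t2 ∈ S, t1 ≠ t2 ∧ t1 ∉ D ∧ t2 ∉ D)
    (t : α) (htS : t ∈ S)
    (C C' C'' : Finset α) (hC : IsMCut w S lam s u W C)
    (hs' : s ∈ C') (hu' : u ∈ C')
    (htC : t ∉ C) (htC' : t ∉ C') (htC'' : t ∉ C'')
    (hUcap : cutCap w (C' ∪ C'') = lam) :
    C ⊆ C' ∪ C'' := by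
  obtain ⟨⟨⟨hStC, hcapC⟩, hsC, huC, hnearC⟩, ⟨t1, ht1S, t2, ht2S, hne12, ht1C, ht2C⟩, -⟩ := hC
  have hsU : s ∈ C' ∪ C'' := Finset.mem_union.mpr (Or.inl hs')
  have huU : u ∈ C' ∪ C'' := Finset.mem_union.mpr (Or.inl hu')
  have hStX : IsSteinerCut S (C ∩ (C' ∪ C'')) :=
    ⟨⟨s, Finset.mem_inter.mpr ⟨Finset.mem_inter.mpr ⟨hsC, hsU⟩, hsS⟩⟩,
     ⟨t1, by simp [Finset.mem_sdiff, Finset.mem_inter, ht1S, ht1C]⟩⟩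
  have hXge : lam ≤ cutCap w (C ∩ (C' ∪ C'')) := hlam_min _ hStX
  have hXne : cutCap w (C ∩ (C' ∪ C'')) ≠ lam := by
    intro h
    exact hNoD ⟨C ∩ (C' ∪ C''), ⟨hStX, h⟩, Finset.mem_inter.mpr ⟨hsC, hsU⟩, t1, ht1S, t2, ht2S,
      hne12, by simp [Finset.mem_inter, ht1C], by simp [Finset.mem_inter, ht2C]⟩
  have hStB : IsSteinerCut S (C ∪ (C' ∪ C'')) :=
    ⟨⟨s, by simp [Finset.mem_inter, Finset.mem_union, hsC, hsS]⟩,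
     ⟨t, by simp [Finset.mem_sdiff, Finset.mem_union, htS, htC, htC', htC'']⟩⟩
  have hBge : lam ≤ cutCap w (C ∪ (C' ∪ C'')) := hlam_min _ hStB
  obtain ⟨-, hsubm⟩ := cut_identities w hsym C (C' ∪ C'')
  have hXeq : cutCap w (C ∩ (C' ∪ C'')) = lam + 1 := by omega
  have hnear := hnearC _ ⟨hStX, hXeq⟩ (Finset.mem_inter.mpr ⟨hsC, hsU⟩)
    (Finset.mem_inter.mpr ⟨huC, huU⟩)
  have hXC : C ∩ (C' ∪ C'') = C := by
    by_contra hx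
    exact hnear (Finset.ssubset_iff_subset_ne.mpr ⟨Finset.inter_subset_left, hx⟩)
  intro a ha
  have : a ∈ C ∩ (C' ∪ C'') := hXC.symm ▸ ha
  exact (Finset.mem_inter.mp this).2

/-- A Steiner vertex lies outside at most two m-cuts of a vertex. -/
theorem steiner_vertex_outside_at_most_two_m_cuts
    (w : α → α → ℕ) (hsym : ∀ u v, w u v = w v u) (hdiag : ∀ u, w u u = 0)
    (hconn : ∀ A : Finset α, A.Nonempty → A ≠ Finset.univ → 1 ≤ cutCap w A)
    (S : Finset α) (hScard : 2 ≤ S.card) (lam : ℕ)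
    (hlam_ex : ∃ C : Finset α, IsSteinerCut S C ∧ cutCap w C = lam)
    (hlam_min : ∀ C : Finset α, IsSteinerCut S C → lam ≤ cutCap w C)
    (W : Finset α) (hW : IsClass w S lam W)
    (s : α) (hsS : s ∈ S) (hsW : s ∈ W) (u : α) (huW : u ∈ W)
    (hNoD : ¬ ∃ D : Finset α, IsSMincut w S lam D ∧ s ∈ D ∧
        ∃ t1 ∈ S, ∃ t2 ∈ S, t1 ≠ t2 ∧ t1 ∉ D ∧ t2 ∉ D)
    (C1 C2 C3 : Finset α) (h12 : C1 ≠ C2) (h13 : C1 ≠ C3) (h23 : C2 ≠ C3)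
    (hC1 : IsMCut w S lam s u W C1) (hC2 : IsMCut w S lam s u W C2)
    (hC3 : IsMCut w S lam s u W C3) :
    ¬ ∃ t ∈ S, t ∉ C1 ∪ C2 ∪ C3 := by
  rintro ⟨t, htS, htU⟩
  rw [Finset.mem_union, Finset.mem_union] at htU
  push_neg at htU
  obtain ⟨⟨ht1, ht2⟩, ht3⟩ := htU
  -- lam ≥ 1
  obtain ⟨C0, hC0St, hC0cap⟩ := hlam_ex
  have hlam1 : 1 ≤ lam := by
    rw [← hC0cap]
    refine hconn C0 ?_ ?_
    · obtain ⟨x, hx⟩ := hC0St.1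
      exact ⟨x, (Finset.mem_inter.mp hx).1⟩
    · obtain ⟨y, hy⟩ := hC0St.2
      rw [Finset.mem_sdiff] at hy
      intro h
      exact hy.2 (h.symm ▸ Finset.mem_univ y)
  -- no S-mincut separates two vertices of W
  have hclass : ∀ D, IsSMincut w S lam D → ∀ x ∈ W, ∀ y ∈ W, ¬ Separates D x y := by
    obtain ⟨u0, hu0⟩ := hW
    intro D hD x hx y hy hsep
    have hx' := (hu0 x).mp hx D hD
    have hy' := (hu0 y).mp hy D hD
    unfold Separates at hx' hy' hsep
    tauto
  have hsC1 : s ∈ C1 := hC1.1.2.1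
  have huC1 : u ∈ C1 := hC1.1.2.2.1
  have hsC2 : s ∈ C2 := hC2.1.2.1
  have huC2 : u ∈ C2 := hC2.1.2.2.1
  have hP12 := pair_key w hsym S lam hlam_min W hclass s hsS hsW u hNoD t htS
    C1 C2 h12 ht1 ht2 hC1 hC2
  have hP13 := pair_key w hsym S lam hlam_min W hclass s hsS hsW u hNoD t htS
    C1 C3 h13 ht1 ht3 hC1 hC3
  have hP23 := pair_key w hsym S lam hlam_min W hclass s hsS hsW u hNoD t htS
    C2 C3 h23 ht2 ht3 hC2 hC3
  have sub1 : C1 ⊆ C2 ∪ C3 := mcut_subset_union w hsym S lam hlam_min W s hsS u hNoD t htS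
    C1 C2 C3 hC1 hsC2 huC2 ht1 ht2 ht3 hP23.1
  have sub2 : C2 ⊆ C1 ∪ C3 := mcut_subset_union w hsym S lam hlam_min W s hsS u hNoD t htS
    C2 C1 C3 hC2 hsC1 huC1 ht2 ht1 ht3 hP13.1
  have sub3 : C3 ⊆ C1 ∪ C2 := mcut_subset_union w hsym S lam hlam_min W s hsS u hNoD t htS
    C3 C1 C2 hC3 hsC1 huC1 ht3 ht1 ht2 hP12.1
  -- the big union is a Steiner cut
  have hStU : IsSteinerCut S (C1 ∪ C2 ∪ C3) :=
    ⟨⟨s, by simp [Finset.mem_inter, Finset.mem_union, hsC1, hsS]⟩,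
     ⟨t, by simp [Finset.mem_sdiff, Finset.mem_union, htS, ht1, ht2, ht3]⟩⟩
  have hUge : lam ≤ cutCap w (C1 ∪ C2 ∪ C3) := hlam_min _ hStU
  -- the big union is covered by the pairwise intersections
  have hcover : C1 ∪ C2 ∪ C3 ⊆ (C1 ∩ C2) ∪ ((C1 ∩ C3) ∪ (C2 ∩ C3)) := by
    intro a ha
    rw [Finset.mem_union, Finset.mem_union] at ha
    rw [Finset.mem_union, Finset.mem_union, Finset.mem_inter, Finset.mem_inter,
      Finset.mem_inter]
    rcases ha with (h | h) | h
    · rcases Finset.mem_union.mp (sub1 h) with h' | h'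
      · exact Or.inl ⟨h, h'⟩
      · exact Or.inr (Or.inl ⟨h, h'⟩)
    · rcases Finset.mem_union.mp (sub2 h) with h' | h'
      · exact Or.inl ⟨h', h⟩
      · exact Or.inr (Or.inr ⟨h, h'⟩)
    · rcases Finset.mem_union.mp (sub3 h) with h' | h'
      · exact Or.inr (Or.inl ⟨h', h⟩)
      · exact Or.inr (Or.inr ⟨h', h⟩)
  -- complements shrink
  have hc12 : (C1 ∪ C2 ∪ C3)ᶜ ⊆ (C1 ∪ C2)ᶜ := by
    intro a ha
    simp only [Finset.mem_compl, Finset.mem_union] at *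
    tauto
  have hc13 : (C1 ∪ C2 ∪ C3)ᶜ ⊆ (C1 ∪ C3)ᶜ := by
    intro a ha
    simp only [Finset.mem_compl, Finset.mem_union] at *
    tauto
  have hc23 : (C1 ∪ C2 ∪ C3)ᶜ ⊆ (C2 ∪ C3)ᶜ := by
    intro a ha
    simp only [Finset.mem_compl, Finset.mem_union] at *
    tauto
  have h1 : ecap w (C1 ∩ C2) ((C1 ∪ C2 ∪ C3)ᶜ) = 0 :=
    Nat.le_zero.mp (le_trans (ecap_mono w (Finset.Subset.refl _) hc12) (le_of_eq hP12.2))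
  have h2 : ecap w (C1 ∩ C3) ((C1 ∪ C2 ∪ C3)ᶜ) = 0 :=
    Nat.le_zero.mp (le_trans (ecap_mono w (Finset.Subset.refl _) hc13) (le_of_eq hP13.2))
  have h3 : ecap w (C2 ∩ C3) ((C1 ∪ C2 ∪ C3)ᶜ) = 0 :=
    Nat.le_zero.mp (le_trans (ecap_mono w (Finset.Subset.refl _) hc23) (le_of_eq hP23.2))
  have hle : cutCap w (C1 ∪ C2 ∪ C3) ≤ ecap w (C1 ∩ C2) ((C1 ∪ C2 ∪ C3)ᶜ)
      + (ecap w (C1 ∩ C3) ((C1 ∪ C2 ∪ C3)ᶜ) + ecap w (C2 ∩ C3) ((C1 ∪ C2 ∪ C3)ᶜ)) := by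
    calc cutCap w (C1 ∪ C2 ∪ C3) = ecap w (C1 ∪ C2 ∪ C3) ((C1 ∪ C2 ∪ C3)ᶜ) := rfl
      _ ≤ ecap w ((C1 ∩ C2) ∪ ((C1 ∩ C3) ∪ (C2 ∩ C3))) ((C1 ∪ C2 ∪ C3)ᶜ) :=
          ecap_mono w hcover (Finset.Subset.refl _)
      _ ≤ ecap w (C1 ∩ C2) ((C1 ∪ C2 ∪ C3)ᶜ)
          + ecap w ((C1 ∩ C3) ∪ (C2 ∩ C3)) ((C1 ∪ C2 ∪ C3)ᶜ) := ecap_union_le w _ _ _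
      _ ≤ _ := Nat.add_le_add_left (ecap_union_le w _ _ _) _
  omega


end Paper
end

section
/- Assume the multigraph is connected. Let W be a (λ_S+1) class, let s ∈ S ∩ W and u ∈ W, and let C0, C1, C2 be pairwise distinct nearest (λ_S+1) cuts of u containing s. If some vertex of W lies outside C0 ∪ C1 ∪ C2, then there exists an index i ∈ {0,1,2} such that no vertex of W lies in Cᵢᶜ ∩ C_{(i+1) mod 3} ∩ C_{(i+2) mod 3}. -/
/-!
Suppose every region `Cᵢᶜ ∩ Cⱼ ∩ Cₖ` meets `W`, and let `v ∈ W` lie outside all three cuts.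
The intersection of two of the cuts is a Steiner cut separating `s` from `v` and lying strictly
inside a nearest cut, so its capacity is at least `λ + 2`; by submodularity the union of the two
cuts has capacity at most `λ`, hence contains all of `S`. Therefore `Pᵢ = (Cⱼ ∩ Cₖ) \ Cᵢ` is a
Steiner cut separating a vertex of `W` from `s`, so `c(Pᵢ) ≥ λ + 1 = c(Cᵢ)`, which yields
`c(Cᵢ ∪ Pᵢ) ≤ 2 d(Pᵢ, (Cᵢ ∪ Pᵢ)ᶜ)`, where `d = crossWeight` counts edges between two sets.
Any two of the sets `Cᵢ ∪ Pᵢ` meet in the majority set `D` of vertices lying in at least two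
cuts, so submodularity gives
`c(C₀ ∪ C₁ ∪ C₂) + 2 c(D) ≤ ∑ c(Cᵢ ∪ Pᵢ) ≤ 2 ∑ d(Pᵢ, Dᶜ) ≤ 2 c(D)`, contradicting connectivity.
-/

open Finset

namespace Paper

variable {α : Type*} [Fintype α] [DecidableEq α]

def crossWeight (w : α → α → ℕ) (X Y : Finset α) : ℕ := ∑ x ∈ X, ∑ y ∈ Y, w x y

section Capacity

variable {w : α → α → ℕ}

omit [Fintype α] [DecidableEq α] in
theorem crossWeight_comm (hsym : ∀ u v, w u v = w v u) (X Y : Finset α) :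
    crossWeight w X Y = crossWeight w Y X := by
  rw [crossWeight, crossWeight, Finset.sum_comm]
  exact sum_congr rfl fun y _ => sum_congr rfl fun x _ => hsym x y

omit [Fintype α] in
theorem crossWeight_union_left {X X' : Finset α} (Y : Finset α) (h : Disjoint X X') :
    crossWeight w (X ∪ X') Y = crossWeight w X Y + crossWeight w X' Y :=
  sum_union h

omit [Fintype α] in
theorem crossWeight_union_right (X : Finset α) {Y Y' : Finset α} (h : Disjoint Y Y') :
    crossWeight w X (Y ∪ Y') = crossWeight w X Y + crossWeight w X Y' := by
  simp only [crossWeight, sum_union h, sum_add_distrib]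

omit [Fintype α] [DecidableEq α] in
theorem crossWeight_mono_left {X X' : Finset α} (Y : Finset α) (h : X ⊆ X') :
    crossWeight w X Y ≤ crossWeight w X' Y :=
  sum_le_sum_of_subset h

omit [Fintype α] [DecidableEq α] in
theorem crossWeight_mono_right (X : Finset α) {Y Y' : Finset α} (h : Y ⊆ Y') :
    crossWeight w X Y ≤ crossWeight w X Y' :=
  sum_le_sum fun _ _ => sum_le_sum_of_subset h

theorem cutCap_compl (hsym : ∀ u v, w u v = w v u) (A : Finset α) :
    cutCap w Aᶜ = cutCap w A := by
  rw [cutCap, cutCap, compl_compl]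
  exact crossWeight_comm hsym Aᶜ A

theorem cutCap_add_cutCap_of_disjoint (hsym : ∀ u v, w u v = w v u) {A B : Finset α}
    (h : Disjoint A B) :
    cutCap w A + cutCap w B = cutCap w (A ∪ B) + 2 * crossWeight w A B := by
  have hA : Aᶜ = B ∪ (A ∪ B)ᶜ := by
    ext x; have := fun hx : x ∈ A => disjoint_left.mp h hx; simp only [mem_compl, mem_union]; tauto
  have hB : Bᶜ = A ∪ (A ∪ B)ᶜ := by
    ext x; have := fun hx : x ∈ A => disjoint_left.mp h hx; simp only [mem_compl, mem_union]; tauto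
  have hBU : Disjoint B (A ∪ B)ᶜ :=
    disjoint_compl_right.mono_right (compl_subset_compl.2 subset_union_right)
  have hAU : Disjoint A (A ∪ B)ᶜ :=
    disjoint_compl_right.mono_right (compl_subset_compl.2 subset_union_left)
  change crossWeight w A Aᶜ + crossWeight w B Bᶜ =
    crossWeight w (A ∪ B) (A ∪ B)ᶜ + 2 * crossWeight w A B
  rw [hA, hB, crossWeight_union_right A hBU, crossWeight_union_right B hAU,
    crossWeight_union_left _ h, crossWeight_comm hsym B A]
  ring

theorem cutCap_union_add_cutCap_inter_le (hsym : ∀ u v, w u v = w v u) (A B : Finset α) :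
    cutCap w (A ∪ B) + cutCap w (A ∩ B) ≤ cutCap w A + cutCap w B := by
  have hB := cutCap_add_cutCap_of_disjoint hsym (disjoint_sdiff_inter B A)
  have hAB := cutCap_add_cutCap_of_disjoint hsym (disjoint_sdiff (s := A) (t := B))
  have hA := crossWeight_union_left (w := w) (B \ A) (disjoint_sdiff_inter A B)
  rw [sdiff_union_inter] at hB hA
  rw [union_sdiff_self_eq_union] at hAB
  rw [inter_comm B A, crossWeight_comm hsym (B \ A)] at hB
  omega

theorem cutCap_union_add_cutCap_of_disjoint (hsym : ∀ u v, w u v = w v u) {A P : Finset α}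
    (h : Disjoint A P) :
    cutCap w (A ∪ P) + cutCap w P = cutCap w A + 2 * crossWeight w P (A ∪ P)ᶜ := by
  have hP : Disjoint P (A ∪ P)ᶜ :=
    disjoint_compl_right.mono_right (compl_subset_compl.2 subset_union_right)
  have hAc : P ∪ (A ∪ P)ᶜ = Aᶜ := by
    ext x; have := fun hx : x ∈ A => disjoint_left.mp h hx; simp only [mem_compl, mem_union]; tauto
  have := cutCap_add_cutCap_of_disjoint hsym hP
  rw [hAc, cutCap_compl hsym, cutCap_compl hsym] at this
  omega

theorem cutCap_union_union_add_crossWeight_le (hsym : ∀ u v, w u v = w v u) (C₀ C₁ C₂ : Finset α) :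
    cutCap w (C₀ ∪ C₁ ∪ C₂) + 2 * (crossWeight w ((C₁ ∩ C₂) \ C₀) (C₀ ∪ C₁ ∩ C₂)ᶜ +
      crossWeight w ((C₂ ∩ C₀) \ C₁) (C₁ ∪ C₂ ∩ C₀)ᶜ +
      crossWeight w ((C₀ ∩ C₁) \ C₂) (C₂ ∪ C₀ ∩ C₁)ᶜ)
      ≤ cutCap w (C₀ ∪ C₁ ∩ C₂) + cutCap w (C₁ ∪ C₂ ∩ C₀) + cutCap w (C₂ ∪ C₀ ∩ C₁) := by
  set D := C₀ ∩ C₁ ∪ C₁ ∩ C₂ ∪ C₂ ∩ C₀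
  have h01 := cutCap_union_add_cutCap_inter_le hsym (C₀ ∪ C₁ ∩ C₂) (C₁ ∪ C₂ ∩ C₀)
  have h012 := cutCap_union_add_cutCap_inter_le hsym
    ((C₀ ∪ C₁ ∩ C₂) ∪ (C₁ ∪ C₂ ∩ C₀)) (C₂ ∪ C₀ ∩ C₁)
  have e01 : (C₀ ∪ C₁ ∩ C₂) ∩ (C₁ ∪ C₂ ∩ C₀) = D := by
    ext x; simp only [D, mem_inter, mem_union]; tauto
  have e012 : ((C₀ ∪ C₁ ∩ C₂) ∪ (C₁ ∪ C₂ ∩ C₀)) ∩ (C₂ ∪ C₀ ∩ C₁) = D := by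
    ext x; simp only [D, mem_inter, mem_union]; tauto
  have eU : (C₀ ∪ C₁ ∩ C₂) ∪ (C₁ ∪ C₂ ∩ C₀) ∪ (C₂ ∪ C₀ ∩ C₁) = C₀ ∪ C₁ ∪ C₂ := by
    ext x; simp only [mem_inter, mem_union]; tauto
  rw [e01] at h01
  rw [e012, eU] at h012
  have hD : crossWeight w ((C₁ ∩ C₂) \ C₀) (C₀ ∪ C₁ ∩ C₂)ᶜ +
      crossWeight w ((C₂ ∩ C₀) \ C₁) (C₁ ∪ C₂ ∩ C₀)ᶜ +
      crossWeight w ((C₀ ∩ C₁) \ C₂) (C₂ ∪ C₀ ∩ C₁)ᶜ ≤ cutCap w D := by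
    have hc : ∀ {X}, D ⊆ X → Xᶜ ⊆ Dᶜ := compl_subset_compl.2
    calc _ ≤ crossWeight w ((C₁ ∩ C₂) \ C₀) Dᶜ + crossWeight w ((C₂ ∩ C₀) \ C₁) Dᶜ +
            crossWeight w ((C₀ ∩ C₁) \ C₂) Dᶜ := by
          gcongr <;> apply crossWeight_mono_right <;> apply hc <;> intro x <;>
            simp only [D, mem_inter, mem_union] <;> tauto
      _ = crossWeight w (((C₁ ∩ C₂) \ C₀) ∪ ((C₂ ∩ C₀) \ C₁) ∪ ((C₀ ∩ C₁) \ C₂)) Dᶜ := by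
          rw [crossWeight_union_left, crossWeight_union_left] <;>
            simp only [disjoint_left, mem_union, mem_inter, mem_sdiff] <;> tauto
      _ ≤ cutCap w D := by
          apply crossWeight_mono_left
          intro x; simp only [D, mem_inter, mem_union, mem_sdiff]; tauto
  omega

end Capacity

omit [Fintype α] in
theorem IsSteinerCut.of_mem {S X : Finset α} {s t : α} (hs : s ∈ S) (hsX : s ∈ X) (ht : t ∈ S)
    (htX : t ∉ X) : IsSteinerCut S X :=
  ⟨⟨s, mem_inter.2 ⟨hsX, hs⟩⟩, ⟨t, mem_sdiff.2 ⟨ht, htX⟩⟩⟩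

section Cuts

variable {w : α → α → ℕ} {S : Finset α} {lam : ℕ} {W : Finset α}

theorem IsClass.not_separates (hW : IsClass w S lam W) {x y : α} (hx : x ∈ W) (hy : y ∈ W)
    {C : Finset α} (hC : IsSMincut w S lam C) : ¬ Separates C x y := by
  obtain ⟨u₀, hu₀⟩ := hW
  have hx' := (hu₀ x).1 hx C hC
  have hy' := (hu₀ y).1 hy C hC
  unfold Separates at *
  tauto

theorem IsClass.lt_cutCap (hlam_min : ∀ C : Finset α, IsSteinerCut S C → lam ≤ cutCap w C)
    (hW : IsClass w S lam W) {X : Finset α} (hX : IsSteinerCut S X) {x y : α} (hx : x ∈ W)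
    (hy : y ∈ W) (hxX : x ∈ X) (hyX : y ∉ X) : lam < cutCap w X :=
  (hlam_min X hX).lt_of_ne fun h => hW.not_separates hx hy ⟨hX, h.symm⟩ (Or.inl ⟨hxX, hyX⟩)

variable {s u : α}

theorem IsNearestPlusOneCut.not_subset {A B : Finset α} (hA : IsNearestPlusOneCut w S lam s u A)
    (hB : IsNearestPlusOneCut w S lam s u B) (hne : A ≠ B) : ¬ A ⊆ B :=
  fun h => hB.2.2.2 A hA.1 hA.2.1 hA.2.2.1 (h.ssubset_of_ne hne)

theorem IsNearestPlusOneCut.subset_union (hsym : ∀ u v, w u v = w v u)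
    (hlam_min : ∀ C : Finset α, IsSteinerCut S C → lam ≤ cutCap w C) (hW : IsClass w S lam W)
    (hsS : s ∈ S) (hsW : s ∈ W) {v : α} (hvW : v ∈ W) {A B : Finset α}
    (hA : IsNearestPlusOneCut w S lam s u A) (hB : IsNearestPlusOneCut w S lam s u B)
    (hne : A ≠ B) (hvA : v ∉ A) (hvB : v ∉ B) : S ⊆ A ∪ B := by
  obtain ⟨t, ht⟩ := hA.1.1.2
  obtain ⟨htS, htA⟩ := mem_sdiff.1 ht
  have hsAB : s ∈ A ∩ B := mem_inter.2 ⟨hA.2.1, hB.2.1⟩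
  have hcut : IsSteinerCut S (A ∩ B) := .of_mem hsS hsAB htS fun h => htA (mem_inter.1 h).1
  have hlt : lam < cutCap w (A ∩ B) :=
    hW.lt_cutCap hlam_min hcut hsW hvW hsAB fun h => hvA (mem_inter.1 h).1
  have hne' : cutCap w (A ∩ B) ≠ lam + 1 := fun h =>
    hA.2.2.2 _ ⟨hcut, h⟩ hsAB (mem_inter.2 ⟨hA.2.2.1, hB.2.2.1⟩)
      (inter_subset_left.ssubset_of_ne fun h => hA.not_subset hB hne (inter_eq_left.1 h))
  have hsub := cutCap_union_add_cutCap_inter_le hsym A B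
  intro t' ht'S
  by_contra ht'AB
  have hsU : s ∈ A ∪ B := mem_union_left _ hA.2.1
  have := hW.lt_cutCap hlam_min (.of_mem hsS hsU ht'S ht'AB) hsW hvW hsU (by simp [hvA, hvB])
  have := hA.1.2
  have := hB.1.2
  omega

theorem IsPlusOneCut.cutCap_union_inter_le (hsym : ∀ u v, w u v = w v u)
    (hlam_min : ∀ C : Finset α, IsSteinerCut S C → lam ≤ cutCap w C) (hW : IsClass w S lam W)
    (hsS : s ∈ S) (hsW : s ∈ W) {A B C : Finset α} (hA : IsPlusOneCut w S lam A) (hsA : s ∈ A)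
    (hSB : S ⊆ A ∪ B) (hSC : S ⊆ A ∪ C) {p : α} (hpW : p ∈ W) (hpA : p ∉ A) (hpB : p ∈ B)
    (hpC : p ∈ C) : cutCap w (A ∪ B ∩ C) ≤ 2 * crossWeight w ((B ∩ C) \ A) (A ∪ B ∩ C)ᶜ := by
  obtain ⟨t, ht⟩ := hA.1.2
  obtain ⟨htS, htA⟩ := mem_sdiff.1 ht
  have htP : t ∈ (B ∩ C) \ A := by
    have := hSB htS; have := hSC htS; simp_all
  have hsP : s ∉ (B ∩ C) \ A := fun h => (mem_sdiff.1 h).2 hsA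
  have hpP : p ∈ (B ∩ C) \ A := by simp [hpA, hpB, hpC]
  have hlt := hW.lt_cutCap hlam_min (.of_mem htS htP hsS hsP) hpW hsW hpP hsP
  have := cutCap_union_add_cutCap_of_disjoint hsym (disjoint_sdiff (s := A) (t := B ∩ C))
  rw [union_sdiff_self_eq_union] at this
  have := hA.2
  omega

end Cuts

theorem storing_two_cuts_suffices_general
    (w : α → α → ℕ) (hsym : ∀ u v, w u v = w v u)
    (hconn : ∀ A : Finset α, A.Nonempty → A ≠ Finset.univ → 1 ≤ cutCap w A)
    (S : Finset α) (lam : ℕ)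
    (hlam_min : ∀ C : Finset α, IsSteinerCut S C → lam ≤ cutCap w C)
    (W : Finset α) (hW : IsClass w S lam W)
    (s : α) (hsS : s ∈ S) (hsW : s ∈ W) (u : α)
    (C0 C1 C2 : Finset α) (h01 : C0 ≠ C1) (h02 : C0 ≠ C2) (h12 : C1 ≠ C2)
    (hC0 : IsNearestPlusOneCut w S lam s u C0)
    (hC1 : IsNearestPlusOneCut w S lam s u C1)
    (hC2 : IsNearestPlusOneCut w S lam s u C2)
    (hout : ∃ v ∈ W, v ∉ C0 ∪ C1 ∪ C2) :
    (C0ᶜ ∩ C1 ∩ C2) ∩ W = ∅ ∨ (C1ᶜ ∩ C2 ∩ C0) ∩ W = ∅ ∨ (C2ᶜ ∩ C0 ∩ C1) ∩ W = ∅ := by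
  obtain ⟨v, hvW, hv⟩ := hout
  simp only [mem_union, not_or] at hv
  obtain ⟨⟨hv0, hv1⟩, hv2⟩ := hv
  by_contra! hcon
  obtain ⟨⟨p0, hp0⟩, ⟨p1, hp1⟩, ⟨p2, hp2⟩⟩ := hcon
  simp only [mem_inter, mem_compl] at hp0 hp1 hp2
  obtain ⟨⟨⟨hp0C0, hp0C1⟩, hp0C2⟩, hp0W⟩ := hp0
  obtain ⟨⟨⟨hp1C1, hp1C2⟩, hp1C0⟩, hp1W⟩ := hp1
  obtain ⟨⟨⟨hp2C2, hp2C0⟩, hp2C1⟩, hp2W⟩ := hp2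
  have hS01 := hC0.subset_union hsym hlam_min hW hsS hsW hvW hC1 h01 hv0 hv1
  have hS12 := hC1.subset_union hsym hlam_min hW hsS hsW hvW hC2 h12 hv1 hv2
  have hS20 := hC2.subset_union hsym hlam_min hW hsS hsW hvW hC0 h02.symm hv2 hv0
  have h0 := hC0.1.cutCap_union_inter_le hsym hlam_min hW hsS hsW hC0.2.1 hS01
    (union_comm C2 C0 ▸ hS20) hp0W hp0C0 hp0C1 hp0C2
  have h1 := hC1.1.cutCap_union_inter_le hsym hlam_min hW hsS hsW hC1.2.1 hS12
    (union_comm C0 C1 ▸ hS01) hp1W hp1C1 hp1C2 hp1C0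
  have h2 := hC2.1.cutCap_union_inter_le hsym hlam_min hW hsS hsW hC2.2.1 hS20
    (union_comm C1 C2 ▸ hS12) hp2W hp2C2 hp2C0 hp2C1
  have hU : 1 ≤ cutCap w (C0 ∪ C1 ∪ C2) := hconn _ ⟨s, by simp [hC0.2.1]⟩ fun h => by
    simpa [hv0, hv1, hv2] using h.symm.subset (mem_univ v)
  have := cutCap_union_union_add_crossWeight_le hsym C0 C1 C2
  omega

/-- Storing at most two nearest (λ_S+1) cuts suffices. -/
theorem storing_two_cuts_suffices
    (w : α → α → ℕ) (hsym : ∀ u v, w u v = w v u) (hdiag : ∀ u, w u u = 0)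
    (hconn : ∀ A : Finset α, A.Nonempty → A ≠ Finset.univ → 1 ≤ cutCap w A)
    (S : Finset α) (hScard : 2 ≤ S.card) (lam : ℕ)
    (hlam_ex : ∃ C : Finset α, IsSteinerCut S C ∧ cutCap w C = lam)
    (hlam_min : ∀ C : Finset α, IsSteinerCut S C → lam ≤ cutCap w C)
    (W : Finset α) (hW : IsClass w S lam W)
    (s : α) (hsS : s ∈ S) (hsW : s ∈ W) (u : α) (huW : u ∈ W)
    (C0 C1 C2 : Finset α) (h01 : C0 ≠ C1) (h02 : C0 ≠ C2) (h12 : C1 ≠ C2)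
    (hC0 : IsNearestPlusOneCut w S lam s u C0)
    (hC1 : IsNearestPlusOneCut w S lam s u C1)
    (hC2 : IsNearestPlusOneCut w S lam s u C2)
    (hout : ∃ v ∈ W, v ∉ C0 ∪ C1 ∪ C2) :
    (C0ᶜ ∩ C1 ∩ C2) ∩ W = ∅ ∨ (C1ᶜ ∩ C2 ∩ C0) ∩ W = ∅ ∨ (C2ᶜ ∩ C0 ∩ C1) ∩ W = ∅ :=
  storing_two_cuts_suffices_general w hsym hconn S lam hlam_min W hW s hsS hsW u C0 C1 C2 h01 h02
    h12 hC0 hC1 hC2 hout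

end Paper
end

section
/- (Property P3) Let W be a (λ_S+1) class with W ∩ S = {s}, and assume every vertex of V∖W belongs to S. Let p, q ∈ W with w(p,q) ≥ 1, and let C, C' be crossing (λ_S+1) cuts (all four sets C ∩ C', C∖C', C'∖C, V∖(C ∪ C') are nonempty) such that s, p ∈ C ∩ C' and q ∉ C ∪ C' (so the edge (p,q) contributes to both C and C'). Then (C∖C') ∩ W = ∅ and (C'∖C) ∩ W = ∅ if and only if (C∖C') ∩ S ≠ ∅ and (C'∖C) ∩ S ≠ ∅. -/
open Finset

namespace Paper

variable {α : Type*} [Fintype α] [DecidableEq α]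

/-- Edge count between two sets. -/
def eCount (w : α → α → ℕ) (X Y : Finset α) : ℕ := ∑ u ∈ X, ∑ v ∈ Y, w u v

lemma eCount_symm (w : α → α → ℕ) (hsym : ∀ u v, w u v = w v u) (X Y : Finset α) :
    eCount w X Y = eCount w Y X := by
  unfold eCount
  rw [Finset.sum_comm]
  exact Finset.sum_congr rfl fun v _ => Finset.sum_congr rfl fun u _ => hsym u v

lemma eCount_union_left (w : α → α → ℕ) {X Y : Finset α} (Z : Finset α) (h : Disjoint X Y) :
    eCount w (X ∪ Y) Z = eCount w X Z + eCount w Y Z := by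
  unfold eCount; rw [Finset.sum_union h]

lemma eCount_union_right (w : α → α → ℕ) (Z : Finset α) {X Y : Finset α} (h : Disjoint X Y) :
    eCount w Z (X ∪ Y) = eCount w Z X + eCount w Z Y := by
  unfold eCount
  simp only [Finset.sum_union h]
  rw [Finset.sum_add_distrib]

lemma cutCap_eq_eCount (w : α → α → ℕ) (A : Finset α) : cutCap w A = eCount w A Aᶜ := rfl

lemma cut_decomp (w : α → α → ℕ) (A C1 C2 C3 C4 : Finset α)
    (h1 : A = C1 ∪ C3) (h2 : Aᶜ = C2 ∪ C4)
    (d13 : Disjoint C1 C3) (d24 : Disjoint C2 C4) :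
    cutCap w A = eCount w C1 C2 + eCount w C1 C4 + eCount w C3 C2 + eCount w C3 C4 := by
  rw [cutCap_eq_eCount, h2, h1, eCount_union_left w _ d13,
    eCount_union_right w _ d24, eCount_union_right w _ d24]
  ring

lemma quad_identity (w : α → α → ℕ) (hsym : ∀ u v, w u v = w v u) (A B : Finset α) :
    cutCap w A + cutCap w B =
      cutCap w (A \ B) + cutCap w (B \ A) + 2 * eCount w (A ∩ B) (A ∪ B)ᶜ := by
  have mem : ∀ (X : Finset α) (x : α), x ∈ Xᶜ ↔ x ∉ X := fun X x => Finset.mem_compl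
  have d2 : Disjoint (B \ A) ((A ∪ B)ᶜ) := by
    rw [Finset.disjoint_left]; intro x hx hx2
    simp only [Finset.mem_sdiff, Finset.mem_compl, Finset.mem_union] at hx hx2; tauto
  have d4 : Disjoint (A \ B) ((A ∪ B)ᶜ) := by
    rw [Finset.disjoint_left]; intro x hx hx2
    simp only [Finset.mem_sdiff, Finset.mem_compl, Finset.mem_union] at hx hx2; tauto
  have eA : cutCap w A = eCount w (A \ B) (B \ A) + eCount w (A \ B) (A ∪ B)ᶜ
      + eCount w (A ∩ B) (B \ A) + eCount w (A ∩ B) (A ∪ B)ᶜ := by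
    apply cut_decomp w A (A \ B) (B \ A) (A ∩ B) ((A ∪ B)ᶜ)
    · ext x
      simp only [Finset.mem_union, Finset.mem_sdiff, Finset.mem_inter]; tauto
    · ext x
      simp only [Finset.mem_union, Finset.mem_sdiff, Finset.mem_compl]; tauto
    · rw [Finset.disjoint_left]; intro x hx hx2
      simp only [Finset.mem_sdiff, Finset.mem_inter] at hx hx2; tauto
    · exact d2
  have eB : cutCap w B = eCount w (B \ A) (A \ B) + eCount w (B \ A) (A ∪ B)ᶜ
      + eCount w (A ∩ B) (A \ B) + eCount w (A ∩ B) (A ∪ B)ᶜ := by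
    apply cut_decomp w B (B \ A) (A \ B) (A ∩ B) ((A ∪ B)ᶜ)
    · ext x
      simp only [Finset.mem_union, Finset.mem_sdiff, Finset.mem_inter]; tauto
    · ext x
      simp only [Finset.mem_union, Finset.mem_sdiff, Finset.mem_compl]; tauto
    · rw [Finset.disjoint_left]; intro x hx hx2
      simp only [Finset.mem_sdiff, Finset.mem_inter] at hx hx2; tauto
    · exact d4
  have eC1 : cutCap w (A \ B) = eCount w (A \ B) (A ∩ B) + eCount w (A \ B) (B \ A)
      + eCount w (A \ B) (A ∪ B)ᶜ := by
    have := cut_decomp w (A \ B) (A \ B) (A ∩ B) (∅ : Finset α) ((B \ A) ∪ (A ∪ B)ᶜ)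
      (by simp) (by ext x; simp only [Finset.mem_union, Finset.mem_sdiff, Finset.mem_compl,
        Finset.mem_inter]; tauto)
      (by simp) (by
        rw [Finset.disjoint_left]; intro x hx hx2
        simp only [Finset.mem_union, Finset.mem_sdiff, Finset.mem_compl,
          Finset.mem_inter] at hx hx2; tauto)
    rw [this, eCount_union_right w _ d2]
    have h0 : ∀ Y : Finset α, eCount w (∅ : Finset α) Y = 0 := by intro Y; simp [eCount]
    rw [h0, h0]; ring
  have eC2 : cutCap w (B \ A) = eCount w (B \ A) (A ∩ B) + eCount w (B \ A) (A \ B)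
      + eCount w (B \ A) (A ∪ B)ᶜ := by
    have := cut_decomp w (B \ A) (B \ A) (A ∩ B) (∅ : Finset α) ((A \ B) ∪ (A ∪ B)ᶜ)
      (by simp) (by ext x; simp only [Finset.mem_union, Finset.mem_sdiff, Finset.mem_compl,
        Finset.mem_inter]; tauto)
      (by simp) (by
        rw [Finset.disjoint_left]; intro x hx hx2
        simp only [Finset.mem_union, Finset.mem_sdiff, Finset.mem_compl,
          Finset.mem_inter] at hx hx2; tauto)
    rw [this, eCount_union_right w _ d4]
    have h0 : ∀ Y : Finset α, eCount w (∅ : Finset α) Y = 0 := by intro Y; simp [eCount]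
    rw [h0, h0]; ring
  rw [eA, eB, eC1, eC2,
    eCount_symm w hsym (A \ B) (A ∩ B), eCount_symm w hsym (B \ A) (A ∩ B)]
  ring

set_option maxHeartbeats 2000000 in
/-- Property P3. -/
theorem property_P3
    (w : α → α → ℕ) (hsym : ∀ u v, w u v = w v u) (hdiag : ∀ u, w u u = 0)
    (S : Finset α) (hScard : 2 ≤ S.card) (lam : ℕ)
    (hlam_ex : ∃ C : Finset α, IsSteinerCut S C ∧ cutCap w C = lam)
    (hlam_min : ∀ C : Finset α, IsSteinerCut S C → lam ≤ cutCap w C)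
    (W : Finset α) (hW : IsClass w S lam W)
    (s : α) (hWS : W ∩ S = {s})
    (hcomp : ∀ v : α, v ∉ W → v ∈ S)
    (p q : α) (hpW : p ∈ W) (hqW : q ∈ W) (hpq : 1 ≤ w p q)
    (C C' : Finset α)
    (hC : IsPlusOneCut w S lam C) (hC' : IsPlusOneCut w S lam C')
    (hcross : (C ∩ C').Nonempty ∧ (C \ C').Nonempty ∧ (C' \ C).Nonempty ∧
        ((C ∪ C')ᶜ : Finset α).Nonempty)
    (hs : s ∈ C ∩ C') (hp : p ∈ C ∩ C') (hq : q ∉ C ∪ C') :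
    ((C \ C') ∩ W = ∅ ∧ (C' \ C) ∩ W = ∅) ↔
      (((C \ C') ∩ S).Nonempty ∧ ((C' \ C) ∩ S).Nonempty) := by
  obtain ⟨hne1, hne2, hne3, hne4⟩ := hcross
  constructor
  · rintro ⟨h1, h2⟩
    constructor
    · obtain ⟨x, hx⟩ := hne2
      refine ⟨x, Finset.mem_inter.mpr ⟨hx, hcomp x ?_⟩⟩
      intro hxW
      exact absurd (Finset.mem_inter.mpr ⟨hx, hxW⟩) (by simp [h1])
    · obtain ⟨x, hx⟩ := hne3
      refine ⟨x, Finset.mem_inter.mpr ⟨hx, hcomp x ?_⟩⟩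
      intro hxW
      exact absurd (Finset.mem_inter.mpr ⟨hx, hxW⟩) (by simp [h2])
  · rintro ⟨hS1, hS2⟩
    -- s ∈ S
    have hsS : s ∈ S := by
      have : s ∈ W ∩ S := hWS ▸ Finset.mem_singleton_self s
      exact (Finset.mem_inter.mp this).2
    have hsC : s ∈ C := (Finset.mem_inter.mp hs).1
    have hsC' : s ∈ C' := (Finset.mem_inter.mp hs).2
    -- C\C' and C'\C are Steiner cuts
    have hSt1 : IsSteinerCut S (C \ C') :=
      ⟨hS1, ⟨s, by simp only [Finset.mem_sdiff]; simp [hsS, hsC']⟩⟩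
    have hSt2 : IsSteinerCut S (C' \ C) :=
      ⟨hS2, ⟨s, by simp only [Finset.mem_sdiff]; simp [hsS, hsC]⟩⟩
    have hmin1 := hlam_min _ hSt1
    have hmin2 := hlam_min _ hSt2
    -- crossing term at least 1
    have hqmem : q ∈ ((C ∪ C')ᶜ : Finset α) := Finset.mem_compl.mpr hq
    have hcrossterm : 1 ≤ eCount w (C ∩ C') (C ∪ C')ᶜ := by
      calc 1 ≤ w p q := hpq
        _ ≤ ∑ v ∈ (C ∪ C')ᶜ, w p v :=
          Finset.single_le_sum (fun v _ => Nat.zero_le _) hqmem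
        _ ≤ ∑ u ∈ C ∩ C', ∑ v ∈ (C ∪ C')ᶜ, w u v :=
          Finset.single_le_sum (f := fun u => ∑ v ∈ (C ∪ C')ᶜ, w u v)
            (fun u _ => Nat.zero_le _) hp
        _ = eCount w (C ∩ C') (C ∪ C')ᶜ := rfl
    have hquad := quad_identity w hsym C C'
    rw [hC.2, hC'.2] at hquad
    -- conclude both are mincuts
    have hcap1 : cutCap w (C \ C') = lam := by omega
    have hcap2 : cutCap w (C' \ C) = lam := by omega
    obtain ⟨u0, hu0⟩ := hW
    have hnoq1 := (hu0 q).mp hqW (C \ C') (⟨hSt1, hcap1⟩ : IsSMincut w S lam (C \ C'))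
    have hnoq2 := (hu0 q).mp hqW (C' \ C) (⟨hSt2, hcap2⟩ : IsSMincut w S lam (C' \ C))
    have hqn1 : q ∉ C \ C' := by simp at hq ⊢; tauto
    have hqn2 : q ∉ C' \ C := by simp at hq ⊢; tauto
    constructor
    · rw [Finset.eq_empty_iff_forall_notMem]
      intro x hx
      obtain ⟨hx1, hxW⟩ := Finset.mem_inter.mp hx
      have hnox := (hu0 x).mp hxW (C \ C') (⟨hSt1, hcap1⟩ : IsSMincut w S lam (C \ C'))
      unfold Separates at hnoq1 hnox
      by_cases h0 : u0 ∈ C \ C' <;> tauto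
    · rw [Finset.eq_empty_iff_forall_notMem]
      intro x hx
      obtain ⟨hx1, hxW⟩ := Finset.mem_inter.mp hx
      have hnox := (hu0 x).mp hxW (C' \ C) (⟨hSt2, hcap2⟩ : IsSMincut w S lam (C' \ C))
      unfold Separates at hnoq2 hnox
      by_cases h0 : u0 ∈ C' \ C <;> tauto

end Paper
end

section
/- Let W be a (λ_S+1) class with s ∈ S ∩ W. Let p, q, u ∈ W with q ≠ u, u ≠ s, and w(p,q) ≥ 1, and let C be a nearest (λ_S+1) cut of p containing s with q ∉ C. Then u ∈ C if and only if there is no (λ_S+1) cut C' with s, p ∈ C' and q, u ∉ C'. -/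
open Finset

namespace Paper

variable {α : Type*} [Fintype α] [DecidableEq α]

section Aux

/-- Sum of multiplicities of edges from `A` to `C` (ordered pairs). -/
private def Bw (w : α → α → ℕ) (A C : Finset α) : ℕ := ∑ u ∈ A, ∑ v ∈ C, w u v

private lemma Bw_union_left (w : α → α → ℕ) {A A' : Finset α} (C : Finset α)
    (h : Disjoint A A') : Bw w (A ∪ A') C = Bw w A C + Bw w A' C :=
  Finset.sum_union h

private lemma Bw_union_right (w : α → α → ℕ) (A : Finset α) {C C' : Finset α}
    (h : Disjoint C C') : Bw w A (C ∪ C') = Bw w A C + Bw w A C' := by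
  unfold Bw
  rw [← Finset.sum_add_distrib]
  exact Finset.sum_congr rfl fun _ _ => Finset.sum_union h

private lemma Bw_symm (w : α → α → ℕ) (hsym : ∀ u v, w u v = w v u) (A C : Finset α) :
    Bw w A C = Bw w C A := by
  unfold Bw
  rw [Finset.sum_comm]
  exact Finset.sum_congr rfl fun v _ => Finset.sum_congr rfl fun u _ => hsym u v

private lemma Bw_ge_single (w : α → α → ℕ) {A C : Finset α} {a c : α}
    (ha : a ∈ A) (hc : c ∈ C) : w a c ≤ Bw w A C :=
  calc w a c ≤ ∑ v ∈ C, w a v := Finset.single_le_sum (fun _ _ => Nat.zero_le _) hc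
    _ ≤ Bw w A C := Finset.single_le_sum (f := fun x => ∑ v ∈ C, w x v)
        (fun _ _ => Nat.zero_le _) ha

private lemma Bw_split (w : α → α → ℕ) {A B A1 A2 B1 B2 : Finset α}
    (hA : A = A1 ∪ A2) (hB : B = B1 ∪ B2) (dA : Disjoint A1 A2) (dB : Disjoint B1 B2) :
    Bw w A B = (Bw w A1 B1 + Bw w A1 B2) + (Bw w A2 B1 + Bw w A2 B2) := by
  rw [hA, hB, Bw_union_left _ _ dA, Bw_union_right _ _ dB, Bw_union_right _ _ dB]

private lemma Bw_split_left (w : α → α → ℕ) {A A1 A2 : Finset α} (B : Finset α)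
    (hA : A = A1 ∪ A2) (dA : Disjoint A1 A2) : Bw w A B = Bw w A1 B + Bw w A2 B := by
  rw [hA, Bw_union_left _ _ dA]

private lemma Bw_split_right (w : α → α → ℕ) (A : Finset α) {B B1 B2 : Finset α}
    (hB : B = B1 ∪ B2) (dB : Disjoint B1 B2) : Bw w A B = Bw w A B1 + Bw w A B2 := by
  rw [hB, Bw_union_right _ _ dB]

private lemma cutCap_eq_Bw (w : α → α → ℕ) (A : Finset α) : cutCap w A = Bw w A Aᶜ := rfl

end Aux

set_option maxHeartbeats 2000000 in
/-- Membership in a nearest (λ_S+1) cut of an endpoint of an edge characterizes the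
non-existence of a (λ_S+1) cut separating the vertex together with the edge. -/
theorem nearest_cut_membership_characterization
    (w : α → α → ℕ) (hsym : ∀ u v, w u v = w v u) (hdiag : ∀ u, w u u = 0)
    (S : Finset α) (hScard : 2 ≤ S.card) (lam : ℕ)
    (hlam_ex : ∃ C : Finset α, IsSteinerCut S C ∧ cutCap w C = lam)
    (hlam_min : ∀ C : Finset α, IsSteinerCut S C → lam ≤ cutCap w C)
    (W : Finset α) (hW : IsClass w S lam W)
    (s : α) (hsS : s ∈ S) (hsW : s ∈ W)
    (p q u : α) (hpW : p ∈ W) (hqW : q ∈ W) (huW : u ∈ W)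
    (hqu : q ≠ u) (hus : u ≠ s) (hpq : 1 ≤ w p q)
    (C : Finset α) (hC : IsNearestPlusOneCut w S lam s p C) (hq : q ∉ C) :
    u ∈ C ↔
      ¬ ∃ C' : Finset α, IsPlusOneCut w S lam C' ∧ s ∈ C' ∧ p ∈ C' ∧ q ∉ C' ∧ u ∉ C' := by
  obtain ⟨⟨hCst, hCcap⟩, hsC, hpC, hnear⟩ := hC
  constructor
  · intro hu
    rintro ⟨C', ⟨hC'st, hC'cap⟩, hsC', hpC', hqC', huC'⟩
    -- any Steiner cut separating two members of the class W has capacity ≥ lam + 1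
    have key : ∀ X : Finset α, IsSteinerCut S X → ∀ a b : α, a ∈ W → b ∈ W →
        a ∈ X → b ∉ X → lam + 1 ≤ cutCap w X := by
      intro X hX a b ha hb haX hbX
      rcases Nat.lt_or_ge (cutCap w X) (lam + 1) with h | h
      · exfalso
        have hge := hlam_min X hX
        have hXl : cutCap w X = lam := le_antisymm (Nat.lt_succ_iff.mp h) hge
        obtain ⟨u0, hu0⟩ := hW
        have h1 := (hu0 a).1 ha X ⟨hX, hXl⟩
        have h2 := (hu0 b).1 hb X ⟨hX, hXl⟩
        simp only [Separates, not_or, not_and] at h1 h2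
        tauto
      · exact h
    have hquu : q ∉ C ∪ C' := by
      simp only [Finset.mem_union]
      tauto
    -- disjointness facts among the four blocks
    have d12 : Disjoint (C ∩ C') (C \ C') := by
      rw [Finset.disjoint_left]; intro a ha hb
      simp only [Finset.mem_inter, Finset.mem_sdiff] at ha hb; tauto
    have d13 : Disjoint (C ∩ C') (C' \ C) := by
      rw [Finset.disjoint_left]; intro a ha hb
      simp only [Finset.mem_inter, Finset.mem_sdiff] at ha hb; tauto
    have d14 : Disjoint (C ∩ C') (C ∪ C')ᶜ := by
      rw [Finset.disjoint_left]; intro a ha hb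
      simp only [Finset.mem_inter, Finset.mem_compl, Finset.mem_union] at ha hb; tauto
    have d23 : Disjoint (C \ C') (C' \ C) := by
      rw [Finset.disjoint_left]; intro a ha hb
      simp only [Finset.mem_sdiff] at ha hb; tauto
    have d24 : Disjoint (C \ C') (C ∪ C')ᶜ := by
      rw [Finset.disjoint_left]; intro a ha hb
      simp only [Finset.mem_sdiff, Finset.mem_compl, Finset.mem_union] at ha hb; tauto
    have d34 : Disjoint (C' \ C) (C ∪ C')ᶜ := by
      rw [Finset.disjoint_left]; intro a ha hb
      simp only [Finset.mem_sdiff, Finset.mem_compl, Finset.mem_union] at ha hb; tauto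
    have d1_34 : Disjoint (C ∩ C') ((C' \ C) ∪ (C ∪ C')ᶜ) := by
      rw [Finset.disjoint_union_right]; exact ⟨d13, d14⟩
    have d2_34 : Disjoint (C \ C') ((C' \ C) ∪ (C ∪ C')ᶜ) := by
      rw [Finset.disjoint_union_right]; exact ⟨d23, d24⟩
    have d1_24 : Disjoint (C ∩ C') ((C \ C') ∪ (C ∪ C')ᶜ) := by
      rw [Finset.disjoint_union_right]; exact ⟨d12, d14⟩
    have d3_24 : Disjoint (C' \ C) ((C \ C') ∪ (C ∪ C')ᶜ) := by
      rw [Finset.disjoint_union_right]; exact ⟨d23.symm, d34⟩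
    -- complement/partition identities
    have e1 : Cᶜ = (C' \ C) ∪ (C ∪ C')ᶜ := by
      ext a
      simp only [Finset.mem_compl, Finset.mem_union, Finset.mem_sdiff]
      tauto
    have e2 : C'ᶜ = (C \ C') ∪ (C ∪ C')ᶜ := by
      ext a
      simp only [Finset.mem_compl, Finset.mem_union, Finset.mem_sdiff]
      tauto
    have e3 : (C ∩ C')ᶜ = (C \ C') ∪ ((C' \ C) ∪ (C ∪ C')ᶜ) := by
      ext a
      simp only [Finset.mem_compl, Finset.mem_union, Finset.mem_sdiff, Finset.mem_inter]
      tauto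
    have e4 : (C \ C')ᶜ = (C ∩ C') ∪ ((C' \ C) ∪ (C ∪ C')ᶜ) := by
      ext a
      simp only [Finset.mem_compl, Finset.mem_union, Finset.mem_sdiff, Finset.mem_inter]
      tauto
    have e5 : (C' \ C)ᶜ = (C ∩ C') ∪ ((C \ C') ∪ (C ∪ C')ᶜ) := by
      ext a
      simp only [Finset.mem_compl, Finset.mem_union, Finset.mem_sdiff, Finset.mem_inter]
      tauto
    have e6 : C ∪ C' = (C ∩ C') ∪ ((C \ C') ∪ (C' \ C)) := by
      ext a
      simp only [Finset.mem_union, Finset.mem_sdiff, Finset.mem_inter]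
      tauto
    have e7 : C = (C ∩ C') ∪ (C \ C') := by
      ext a
      simp only [Finset.mem_union, Finset.mem_sdiff, Finset.mem_inter]
      tauto
    have e8 : C' = (C ∩ C') ∪ (C' \ C) := by
      ext a
      simp only [Finset.mem_union, Finset.mem_sdiff, Finset.mem_inter]
      tauto
    -- capacity decompositions
    have d1_23 : Disjoint (C ∩ C') ((C \ C') ∪ (C' \ C)) := by
      rw [Finset.disjoint_union_right]; exact ⟨d12, d13⟩
    have cC : cutCap w C =
        (Bw w (C ∩ C') (C' \ C) + Bw w (C ∩ C') (C ∪ C')ᶜ) +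
        (Bw w (C \ C') (C' \ C) + Bw w (C \ C') (C ∪ C')ᶜ) := by
      rw [cutCap_eq_Bw, Bw_split w e7 e1 d12 d34]
    have cC' : cutCap w C' =
        (Bw w (C ∩ C') (C \ C') + Bw w (C ∩ C') (C ∪ C')ᶜ) +
        (Bw w (C \ C') (C' \ C) + Bw w (C' \ C) (C ∪ C')ᶜ) := by
      rw [cutCap_eq_Bw, Bw_split w e8 e2 d13 d24, Bw_symm w hsym (C' \ C) (C \ C')]
    have cI : cutCap w (C ∩ C') =
        Bw w (C ∩ C') (C \ C') + (Bw w (C ∩ C') (C' \ C) + Bw w (C ∩ C') (C ∪ C')ᶜ) := by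
      rw [cutCap_eq_Bw, Bw_split_right w _ e3 d2_34, Bw_union_right _ _ d34]
    have cU : cutCap w (C ∪ C') =
        Bw w (C ∩ C') (C ∪ C')ᶜ + (Bw w (C \ C') (C ∪ C')ᶜ + Bw w (C' \ C) (C ∪ C')ᶜ) := by
      rw [cutCap_eq_Bw, Bw_split_left w _ e6 d1_23, Bw_union_left _ _ d23]
    have cD : cutCap w (C \ C') =
        Bw w (C ∩ C') (C \ C') + (Bw w (C \ C') (C' \ C) + Bw w (C \ C') (C ∪ C')ᶜ) := by
      rw [cutCap_eq_Bw, Bw_split_right w _ e4 d1_34, Bw_union_right _ _ d34,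
        Bw_symm w hsym (C \ C') (C ∩ C')]
    have cD' : cutCap w (C' \ C) =
        Bw w (C ∩ C') (C' \ C) + (Bw w (C \ C') (C' \ C) + Bw w (C' \ C) (C ∪ C')ᶜ) := by
      rw [cutCap_eq_Bw, Bw_split_right w _ e5 d1_24, Bw_union_right _ _ d24,
        Bw_symm w hsym (C' \ C) (C ∩ C'), Bw_symm w hsym (C' \ C) (C \ C')]
    -- C ∩ C' is a Steiner cut separating s and q
    obtain ⟨t, ht⟩ := hCst.2
    have htS : t ∈ S := (Finset.mem_sdiff.mp ht).1
    have htC : t ∉ C := (Finset.mem_sdiff.mp ht).2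
    have hIst : IsSteinerCut S (C ∩ C') := by
      refine ⟨⟨s, ?_⟩, ⟨t, ?_⟩⟩
      · simp only [Finset.mem_inter]; exact ⟨⟨hsC, hsC'⟩, hsS⟩
      · simp only [Finset.mem_sdiff, Finset.mem_inter]; tauto
    have hqI : q ∉ C ∩ C' := by
      simp only [Finset.mem_inter]; tauto
    have hsI : s ∈ C ∩ C' := Finset.mem_inter.mpr ⟨hsC, hsC'⟩
    have hIlow : lam + 1 ≤ cutCap w (C ∩ C') := key _ hIst s q hsW hqW hsI hqI
    by_cases hcase : (S \ (C ∪ C')).Nonempty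
    · -- C ∪ C' is a Steiner cut separating s and q
      have hUst : IsSteinerCut S (C ∪ C') := by
        refine ⟨⟨s, ?_⟩, hcase⟩
        simp only [Finset.mem_inter, Finset.mem_union]; tauto
      have hUlow : lam + 1 ≤ cutCap w (C ∪ C') :=
        key _ hUst s q hsW hqW (Finset.mem_union_left _ hsC) hquu
      have hIeq : cutCap w (C ∩ C') = lam + 1 := by omega
      have hss : C ∩ C' ⊂ C := by
        rw [Finset.ssubset_iff_of_subset Finset.inter_subset_left]
        exact ⟨u, hu, by simp only [Finset.mem_inter]; tauto⟩
      exact hnear (C ∩ C') ⟨hIst, hIeq⟩ hsI (Finset.mem_inter.mpr ⟨hpC, hpC'⟩) hss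
    · -- S ⊆ C ∪ C'
      have hsub : ∀ x ∈ S, x ∈ C ∪ C' := by
        intro x hx
        by_contra hxc
        exact hcase ⟨x, Finset.mem_sdiff.mpr ⟨hx, hxc⟩⟩
      obtain ⟨t', ht'⟩ := hC'st.2
      have ht'S : t' ∈ S := (Finset.mem_sdiff.mp ht').1
      have ht'C' : t' ∉ C' := (Finset.mem_sdiff.mp ht').2
      have ht'C : t' ∈ C := by
        have := hsub t' ht'S
        rw [Finset.mem_union] at this; tauto
      have htC' : t ∈ C' := by
        have := hsub t htS
        rw [Finset.mem_union] at this; tauto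
      have hDst : IsSteinerCut S (C \ C') := by
        refine ⟨⟨t', ?_⟩, ⟨s, ?_⟩⟩
        · simp only [Finset.mem_inter, Finset.mem_sdiff]; tauto
        · simp only [Finset.mem_sdiff]; tauto
      have hD'st : IsSteinerCut S (C' \ C) := by
        refine ⟨⟨t, ?_⟩, ⟨s, ?_⟩⟩
        · simp only [Finset.mem_inter, Finset.mem_sdiff]; tauto
        · simp only [Finset.mem_sdiff]; tauto
      have hDlow : lam + 1 ≤ cutCap w (C \ C') := by
        refine key _ hDst u s huW hsW ?_ ?_
        · simp only [Finset.mem_sdiff]; exact ⟨hu, huC'⟩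
        · simp only [Finset.mem_sdiff]; tauto
      have hD'low : lam ≤ cutCap w (C' \ C) := hlam_min _ hD'st
      have hb14 : 1 ≤ Bw w (C ∩ C') (C ∪ C')ᶜ := by
        refine le_trans hpq (Bw_ge_single w ?_ ?_)
        · exact Finset.mem_inter.mpr ⟨hpC, hpC'⟩
        · simp only [Finset.mem_compl, Finset.mem_union]; tauto
      omega
  · intro hno
    by_contra hu
    exact hno ⟨C, ⟨hCst, hCcap⟩, hsC, hpC, hq, hu⟩

end Paper
end

section
/- Let W be a (λ_S+1) class with s ∈ S ∩ W, and let x, y, x', y' ∈ W with w(x,y) ≥ 1 and w(x',y') ≥ 1. Let C1 be a nearest (λ_S+1) cut of x containing s with y, y', x' ∉ C1, and let C2 be a nearest (λ_S+1) cut of x' containing s with y, y', x ∉ C2. Then there is no Steiner vertex t with t ∉ C1 ∪ C2 if and only if there is no (λ_S+1) cut C with s, x, x' ∈ C and y, y' ∉ C. -/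
open Finset

namespace Paper

variable {α : Type*} [Fintype α] [DecidableEq α]

def eW (w : α → α → ℕ) (A B : Finset α) : ℕ := ∑ u ∈ A, ∑ v ∈ B, w u v

lemma cutCap_eq_eW (w : α → α → ℕ) (A : Finset α) : cutCap w A = eW w A Aᶜ := rfl

lemma eW_split_left (w : α → α → ℕ) {A A1 A2 : Finset α} (C : Finset α)
    (h : A = A1 ∪ A2) (hd : Disjoint A1 A2) :
    eW w A C = eW w A1 C + eW w A2 C := by
  rw [h]; exact Finset.sum_union hd

lemma eW_split_right (w : α → α → ℕ) (A : Finset α) {C C1 C2 : Finset α}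
    (h : C = C1 ∪ C2) (hd : Disjoint C1 C2) :
    eW w A C = eW w A C1 + eW w A C2 := by
  rw [h]
  unfold eW
  rw [← Finset.sum_add_distrib]
  exact Finset.sum_congr rfl fun u _ => Finset.sum_union hd

lemma eW_comm (w : α → α → ℕ) (hsym : ∀ u v, w u v = w v u) (A B : Finset α) :
    eW w A B = eW w B A := by
  unfold eW
  rw [Finset.sum_comm]
  exact Finset.sum_congr rfl fun b _ => Finset.sum_congr rfl fun a _ => hsym a b

lemma le_eW (w : α → α → ℕ) {x y : α} {A B : Finset α} (hx : x ∈ A) (hy : y ∈ B) :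
    w x y ≤ eW w A B :=
  le_trans (Finset.single_le_sum (fun i _ => Nat.zero_le _) hy)
    (Finset.single_le_sum (f := fun u => ∑ v ∈ B, w u v) (fun i _ => Nat.zero_le _) hx)

lemma six_formulas (w : α → α → ℕ) (hsym : ∀ u v, w u v = w v u) (A B : Finset α) :
    cutCap w (A ∩ B) = eW w (A∩B) (A\B) + eW w (A∩B) (B\A) + eW w (A∩B) (A∪B)ᶜ ∧
    cutCap w A = eW w (A∩B) (B\A) + eW w (A∩B) (A∪B)ᶜ + eW w (A\B) (B\A) + eW w (A\B) (A∪B)ᶜ ∧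
    cutCap w B = eW w (A∩B) (A\B) + eW w (A∩B) (A∪B)ᶜ + eW w (A\B) (B\A) + eW w (B\A) (A∪B)ᶜ ∧
    cutCap w (A ∪ B) = eW w (A∩B) (A∪B)ᶜ + eW w (A\B) (A∪B)ᶜ + eW w (B\A) (A∪B)ᶜ ∧
    cutCap w (A \ B) = eW w (A∩B) (A\B) + eW w (A\B) (B\A) + eW w (A\B) (A∪B)ᶜ ∧
    cutCap w (B \ A) = eW w (A∩B) (B\A) + eW w (A\B) (B\A) + eW w (B\A) (A∪B)ᶜ := by
  have dXP : Disjoint (A∩B) (A\B) := by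
    rw [Finset.disjoint_left]; intro a h1 h2
    simp only [mem_inter, mem_sdiff] at h1 h2; tauto
  have dXQ : Disjoint (A∩B) (B\A) := by
    rw [Finset.disjoint_left]; intro a h1 h2
    simp only [mem_inter, mem_sdiff] at h1 h2; tauto
  have dXZ : Disjoint (A∩B) (A∪B)ᶜ := by
    rw [Finset.disjoint_left]; intro a h1 h2
    simp only [mem_inter, mem_compl, mem_union] at h1 h2; tauto
  have dPQ : Disjoint (A\B) (B\A) := by
    rw [Finset.disjoint_left]; intro a h1 h2
    simp only [mem_sdiff] at h1 h2; tauto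
  have dPZ : Disjoint (A\B) (A∪B)ᶜ := by
    rw [Finset.disjoint_left]; intro a h1 h2
    simp only [mem_sdiff, mem_compl, mem_union] at h1 h2; tauto
  have dQZ : Disjoint (B\A) (A∪B)ᶜ := by
    rw [Finset.disjoint_left]; intro a h1 h2
    simp only [mem_sdiff, mem_compl, mem_union] at h1 h2; tauto
  have hA : A = (A∩B) ∪ (A\B) := by
    ext a; simp only [mem_union, mem_inter, mem_sdiff]; tauto
  have hB : B = (A∩B) ∪ (B\A) := by
    ext a; simp only [mem_union, mem_inter, mem_sdiff]; tauto
  have hU : A ∪ B = (A∩B) ∪ ((A\B) ∪ (B\A)) := by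
    ext a; simp only [mem_union, mem_inter, mem_sdiff]; tauto
  have hAc : Aᶜ = (B\A) ∪ (A∪B)ᶜ := by
    ext a; simp only [mem_compl, mem_union, mem_sdiff]; tauto
  have hBc : Bᶜ = (A\B) ∪ (A∪B)ᶜ := by
    ext a; simp only [mem_compl, mem_union, mem_sdiff]; tauto
  have hIc : (A∩B)ᶜ = (A\B) ∪ ((B\A) ∪ (A∪B)ᶜ) := by
    ext a; simp only [mem_compl, mem_inter, mem_union, mem_sdiff]; tauto
  have hPc : (A\B)ᶜ = (A∩B) ∪ ((B\A) ∪ (A∪B)ᶜ) := by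
    ext a; simp only [mem_compl, mem_inter, mem_union, mem_sdiff]; tauto
  have hQc : (B\A)ᶜ = (A∩B) ∪ ((A\B) ∪ (A∪B)ᶜ) := by
    ext a; simp only [mem_compl, mem_inter, mem_union, mem_sdiff]; tauto
  have F1 : cutCap w (A∩B) = eW w (A∩B) (A\B) + (eW w (A∩B) (B\A) + eW w (A∩B) (A∪B)ᶜ) := by
    rw [cutCap_eq_eW, eW_split_right w (A∩B) hIc (Finset.disjoint_union_right.mpr ⟨dPQ, dPZ⟩),
      eW_split_right w (A∩B) rfl dQZ]
  have F2 : cutCap w A = eW w (A∩B) (B\A) + eW w (A\B) (B\A) + (eW w (A∩B) (A∪B)ᶜ + eW w (A\B) (A∪B)ᶜ) := by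
    rw [cutCap_eq_eW, eW_split_right w A hAc dQZ, eW_split_left w (B\A) hA dXP,
      eW_split_left w (A∪B)ᶜ hA dXP]
  have F3 : cutCap w B = eW w (A∩B) (A\B) + eW w (A\B) (B\A) + (eW w (A∩B) (A∪B)ᶜ + eW w (B\A) (A∪B)ᶜ) := by
    rw [cutCap_eq_eW, eW_split_right w B hBc dPZ, eW_split_left w (A\B) hB dXQ,
      eW_split_left w (A∪B)ᶜ hB dXQ, eW_comm w hsym (B\A) (A\B)]
  have F4 : cutCap w (A ∪ B) = eW w (A∩B) (A∪B)ᶜ + (eW w (A\B) (A∪B)ᶜ + eW w (B\A) (A∪B)ᶜ) := by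
    rw [cutCap_eq_eW, eW_split_left w (A∪B)ᶜ hU (Finset.disjoint_union_right.mpr ⟨dXP, dXQ⟩),
      eW_split_left w (A∪B)ᶜ rfl dPQ]
  have F5 : cutCap w (A \ B) = eW w (A∩B) (A\B) + (eW w (A\B) (B\A) + eW w (A\B) (A∪B)ᶜ) := by
    rw [cutCap_eq_eW, eW_split_right w (A\B) hPc (Finset.disjoint_union_right.mpr ⟨dXQ, dXZ⟩),
      eW_split_right w (A\B) rfl dQZ, eW_comm w hsym (A\B) (A∩B)]
  have F6 : cutCap w (B \ A) = eW w (A∩B) (B\A) + (eW w (A\B) (B\A) + eW w (B\A) (A∪B)ᶜ) := by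
    rw [cutCap_eq_eW, eW_split_right w (B\A) hQc (Finset.disjoint_union_right.mpr ⟨dXP, dXZ⟩),
      eW_split_right w (B\A) rfl dPZ, eW_comm w hsym (B\A) (A∩B), eW_comm w hsym (B\A) (A\B)]
  refine ⟨by omega, by omega, by omega, by omega, by omega, by omega⟩


lemma class_not_sep {w : α → α → ℕ} {S : Finset α} {lam : ℕ} {W : Finset α}
    (hW : IsClass w S lam W) {a b : α} (ha : a ∈ W) (hb : b ∈ W)
    {D : Finset α} (hD : IsSMincut w S lam D) : (a ∈ D ↔ b ∈ D) := by
  obtain ⟨u0, h⟩ := hW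
  have h1 := (h a).mp ha D hD
  have h2 := (h b).mp hb D hD
  unfold Separates at h1 h2
  by_cases hu : u0 ∈ D <;> by_cases haD : a ∈ D <;> by_cases hbD : b ∈ D <;> tauto

/-- Key lemma: a nearest `(λ+1)` cut of `x` is contained in any `(λ+1)` cut `C`
containing `s, x, x'` and excluding `y, y'`. -/
lemma nearest_subset
    (w : α → α → ℕ) (hsym : ∀ u v, w u v = w v u)
    (S : Finset α) (lam : ℕ)
    (hlam_min : ∀ C : Finset α, IsSteinerCut S C → lam ≤ cutCap w C)
    (W : Finset α) (hW : IsClass w S lam W)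
    (s x y x' y' : α) (hsS : s ∈ S)
    (hsW : s ∈ W) (hxW : x ∈ W) (hyW : y ∈ W) (hx'W : x' ∈ W) (hy'W : y' ∈ W)
    (hxy : 1 ≤ w x y) (hx'y' : 1 ≤ w x' y')
    (C1 : Finset α) (hC1 : IsNearestPlusOneCut w S lam s x C1)
    (hy1 : y ∉ C1) (hy'1 : y' ∉ C1) (hx'1 : x' ∉ C1)
    (C : Finset α) (hC : IsPlusOneCut w S lam C)
    (hsC : s ∈ C) (hxC : x ∈ C) (hx'C : x' ∈ C) (hyC : y ∉ C) (hy'C : y' ∉ C) :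
    C1 ⊆ C := by
  obtain ⟨⟨hC1st, hC1cap⟩, hsC1, hxC1, hnear⟩ := hC1
  obtain ⟨hCst, hCcap⟩ := hC
  obtain ⟨t0, ht0⟩ := hCst.2
  rw [mem_sdiff] at ht0
  obtain ⟨ht0S, ht0C⟩ := ht0
  obtain ⟨F1, F2, F3, F4, F5, F6⟩ := six_formulas w hsym C C1
  -- the intersection C ∩ C1 is a Steiner cut of capacity ≥ lam + 1
  have hstI : IsSteinerCut S (C ∩ C1) :=
    ⟨⟨s, mem_inter.mpr ⟨mem_inter.mpr ⟨hsC, hsC1⟩, hsS⟩⟩,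
     ⟨t0, mem_sdiff.mpr ⟨ht0S, fun h => ht0C (mem_inter.mp h).1⟩⟩⟩
  have hIlow : lam + 1 ≤ cutCap w (C ∩ C1) := by
    have h0 := hlam_min _ hstI
    rcases Nat.lt_or_ge lam (cutCap w (C ∩ C1)) with h | h
    · omega
    · exfalso
      have hmc : IsSMincut w S lam (C ∩ C1) := ⟨hstI, by omega⟩
      have := class_not_sep hW hsW hyW hmc
      simp only [mem_inter, hsC, hsC1, and_self, true_iff] at this
      exact hyC this.1
  by_cases hbig : ∃ t ∈ S, t ∉ C ∪ C1
  · -- there is a Steiner vertex outside C ∪ C1 : then C ∩ C1 is a (λ+1) cut and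
    -- by nearestness C1 ⊆ C
    obtain ⟨t1, ht1S, ht1⟩ := hbig
    have hstU : IsSteinerCut S (C ∪ C1) :=
      ⟨⟨s, mem_inter.mpr ⟨mem_union_left _ hsC, hsS⟩⟩,
       ⟨t1, mem_sdiff.mpr ⟨ht1S, ht1⟩⟩⟩
    have hUlow : lam + 1 ≤ cutCap w (C ∪ C1) := by
      have h0 := hlam_min _ hstU
      rcases Nat.lt_or_ge lam (cutCap w (C ∪ C1)) with h | h
      · omega
      · exfalso
        have hmc : IsSMincut w S lam (C ∪ C1) := ⟨hstU, by omega⟩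
        have := class_not_sep hW hxW hyW hmc
        simp only [mem_union, hxC, true_or, true_iff] at this
        rcases this with h' | h' <;> [exact hyC h'; exact hy1 h']
    have hIeq : cutCap w (C ∩ C1) = lam + 1 := by omega
    have hplus : IsPlusOneCut w S lam (C ∩ C1) := ⟨hstI, hIeq⟩
    have hnot := hnear (C ∩ C1) hplus (mem_inter.mpr ⟨hsC, hsC1⟩)
      (mem_inter.mpr ⟨hxC, hxC1⟩)
    have hsub : C ∩ C1 ⊆ C1 := inter_subset_right
    have heq : C ∩ C1 = C1 := by
      by_contra hne
      exact hnot (by rw [Finset.ssubset_def]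
                     exact ⟨hsub, fun hh => hne (subset_antisymm hsub hh)⟩)
    intro a ha
    rw [← heq] at ha
    exact (mem_inter.mp ha).1
  · -- every Steiner vertex is in C ∪ C1 : contradiction by edge counting
    exfalso
    push_neg at hbig
    have ht0C1 : t0 ∈ C1 := by
      have := hbig t0 ht0S
      rw [mem_union] at this
      tauto
    -- C1 \ C is a Steiner cut
    have hQlow : lam ≤ cutCap w (C1 \ C) := by
      apply hlam_min
      exact ⟨⟨t0, mem_inter.mpr ⟨mem_sdiff.mpr ⟨ht0C1, ht0C⟩, ht0S⟩⟩,
        ⟨s, mem_sdiff.mpr ⟨hsS, fun h => (mem_sdiff.mp h).2 hsC⟩⟩⟩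
    -- C \ C1 is a Steiner cut of capacity ≥ lam + 1
    obtain ⟨t2, ht2⟩ := hC1st.2
    rw [mem_sdiff] at ht2
    obtain ⟨ht2S, ht2C1⟩ := ht2
    have ht2C : t2 ∈ C := by
      have := hbig t2 ht2S
      rw [mem_union] at this
      tauto
    have hstP : IsSteinerCut S (C \ C1) :=
      ⟨⟨t2, mem_inter.mpr ⟨mem_sdiff.mpr ⟨ht2C, ht2C1⟩, ht2S⟩⟩,
       ⟨s, mem_sdiff.mpr ⟨hsS, fun h => (mem_sdiff.mp h).2 hsC1⟩⟩⟩
    have hPlow : lam + 1 ≤ cutCap w (C \ C1) := by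
      have h0 := hlam_min _ hstP
      rcases Nat.lt_or_ge lam (cutCap w (C \ C1)) with h | h
      · omega
      · exfalso
        have hmc : IsSMincut w S lam (C \ C1) := ⟨hstP, by omega⟩
        have := class_not_sep hW hsW hx'W hmc
        have hs' : s ∉ C \ C1 := fun h => (mem_sdiff.mp h).2 hsC1
        have hx'' : x' ∈ C \ C1 := mem_sdiff.mpr ⟨hx'C, hx'1⟩
        tauto
    -- edge bounds
    have hyZ : y ∈ (C ∪ C1)ᶜ := by
      rw [mem_compl, mem_union]; tauto
    have hy'Z : y' ∈ (C ∪ C1)ᶜ := by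
      rw [mem_compl, mem_union]; tauto
    have hg : 1 ≤ eW w (C ∩ C1) (C ∪ C1)ᶜ :=
      le_trans hxy (le_eW w (mem_inter.mpr ⟨hxC, hxC1⟩) hyZ)
    have he : 1 ≤ eW w (C \ C1) (C ∪ C1)ᶜ :=
      le_trans hx'y' (le_eW w (mem_sdiff.mpr ⟨hx'C, hx'1⟩) hy'Z)
    omega

/-- Sufficiency of the Steiner vertex condition. -/
theorem sufficient_condition_dual_failure
    (w : α → α → ℕ) (hsym : ∀ u v, w u v = w v u) (hdiag : ∀ u, w u u = 0)
    (S : Finset α) (hScard : 2 ≤ S.card) (lam : ℕ)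
    (hlam_ex : ∃ C : Finset α, IsSteinerCut S C ∧ cutCap w C = lam)
    (hlam_min : ∀ C : Finset α, IsSteinerCut S C → lam ≤ cutCap w C)
    (W : Finset α) (hW : IsClass w S lam W)
    (s : α) (hsS : s ∈ S) (hsW : s ∈ W)
    (x y x' y' : α) (hxW : x ∈ W) (hyW : y ∈ W) (hx'W : x' ∈ W) (hy'W : y' ∈ W)
    (hxy : 1 ≤ w x y) (hx'y' : 1 ≤ w x' y')
    (C1 C2 : Finset α)
    (hC1 : IsNearestPlusOneCut w S lam s x C1)
    (hy1 : y ∉ C1) (hy'1 : y' ∉ C1) (hx'1 : x' ∉ C1)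
    (hC2 : IsNearestPlusOneCut w S lam s x' C2)
    (hy2 : y ∉ C2) (hy'2 : y' ∉ C2) (hx2 : x ∉ C2) :
    (¬ ∃ t ∈ S, t ∉ C1 ∪ C2) ↔
      (¬ ∃ C : Finset α, IsPlusOneCut w S lam C ∧ s ∈ C ∧ x ∈ C ∧ x' ∈ C ∧
          y ∉ C ∧ y' ∉ C) := by
  constructor
  · intro hnt
    rintro ⟨C, hC, hsC, hxC, hx'C, hyC, hy'C⟩
    push_neg at hnt
    have h1 : C1 ⊆ C := nearest_subset w hsym S lam hlam_min W hW s x y x' y' hsS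
      hsW hxW hyW hx'W hy'W hxy hx'y' C1 hC1 hy1 hy'1 hx'1 C hC hsC hxC hx'C hyC hy'C
    have h2 : C2 ⊆ C := nearest_subset w hsym S lam hlam_min W hW s x' y' x y hsS
      hsW hx'W hy'W hxW hyW hx'y' hxy C2 hC2 hy'2 hy2 hx2 C hC hsC hx'C hxC hy'C hyC
    obtain ⟨t0, ht0⟩ := hC.1.2
    rw [mem_sdiff] at ht0
    have := hnt t0 ht0.1
    rw [mem_union] at this
    rcases this with h | h
    · exact ht0.2 (h1 h)
    · exact ht0.2 (h2 h)
  · intro hnC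
    rintro ⟨t, htS, htn⟩
    apply hnC
    obtain ⟨⟨hC1st, hC1cap⟩, hsC1, hxC1, -⟩ := hC1
    obtain ⟨⟨hC2st, hC2cap⟩, hsC2, hx'C2, -⟩ := hC2
    rw [mem_union] at htn
    push_neg at htn
    obtain ⟨htn1, htn2⟩ := htn
    obtain ⟨F1, F2, F3, F4, F5, F6⟩ := six_formulas w hsym C1 C2
    have hstI : IsSteinerCut S (C1 ∩ C2) :=
      ⟨⟨s, mem_inter.mpr ⟨mem_inter.mpr ⟨hsC1, hsC2⟩, hsS⟩⟩,
       ⟨t, mem_sdiff.mpr ⟨htS, fun h => htn1 (mem_inter.mp h).1⟩⟩⟩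
    have hIlow : lam + 1 ≤ cutCap w (C1 ∩ C2) := by
      have h0 := hlam_min _ hstI
      rcases Nat.lt_or_ge lam (cutCap w (C1 ∩ C2)) with h | h
      · omega
      · exfalso
        have hmc : IsSMincut w S lam (C1 ∩ C2) := ⟨hstI, by omega⟩
        have := class_not_sep hW hsW hxW hmc
        simp only [mem_inter, hsC1, hsC2, and_self, true_iff] at this
        exact hx2 this.2
    have hstU : IsSteinerCut S (C1 ∪ C2) :=
      ⟨⟨s, mem_inter.mpr ⟨mem_union_left _ hsC1, hsS⟩⟩,
       ⟨t, mem_sdiff.mpr ⟨htS, by rw [mem_union]; tauto⟩⟩⟩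
    have hUcap : cutCap w (C1 ∪ C2) = lam + 1 := by
      have h0 := hlam_min _ hstU
      rcases Nat.lt_or_ge lam (cutCap w (C1 ∪ C2)) with h | h
      · omega
      · exfalso
        have hmc : IsSMincut w S lam (C1 ∪ C2) := ⟨hstU, by omega⟩
        have := class_not_sep hW hxW hyW hmc
        simp only [mem_union, hxC1, true_or, true_iff] at this
        rcases this with h' | h' <;> [exact hy1 h'; exact hy2 h']
    refine ⟨C1 ∪ C2, ⟨hstU, hUcap⟩, mem_union_left _ hsC1, mem_union_left _ hxC1,
      mem_union_right _ hx'C2, ?_, ?_⟩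
    · rw [mem_union]; tauto
    · rw [mem_union]; tauto


end Paper
end
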